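/- arXiv:2502.13877 — 5 statements merged into one kernel-verified Lean document; each statement's English description precedes it below -/
import Mathlib

section
/- Fix 0 < R < 1 and ε > 0 with 1 - R - ε > 0, a positive integer ℓ, and a prime power q with q ≥ max(ℓ^{8R/ε + 6}, ℓ·2^{4/ε}). Let n be a positive integer with Rn an integer, and let C ⊆ F_q^n be a random linear code of rate R. Then with probability at least 1 - 2q^{-εn/8}, the code C is (1-R-ε, ℓ, L)-list-recoverable with L ≤ (2ℓ/ε)^{2ℓ/ε}. -/
/-- The agreement set `agr(x, S₁,…,Sₙ) = {i : xᵢ ∈ Sᵢ}`. -/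
def agr {F : Type*} [DecidableEq F] {n : ℕ} (x : Fin n → F) (S : Fin n → Finset F) :
    Finset (Fin n) :=
  Finset.univ.filter fun i => x i ∈ S i

/-- A code `C ⊆ F^n` is `(ρ, ℓ, L)`-list-recoverable if for every choice of input lists
`S₁,…,Sₙ ⊆ F` of size `ℓ`, the number of codewords in the `ρ`-radius list-recovery ball
(those agreeing with the lists on at least a `(1-ρ)` fraction of coordinates) is at most `L`. -/
def ListRecoverable {F : Type*} [DecidableEq F] {n : ℕ} (C : Set (Fin n → F))
    (ρ : ℝ) (ℓ L : ℕ) : Prop :=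
  ∀ S : Fin n → Finset F, (∀ i, (S i).card = ℓ) →
    ({x ∈ C | (1 - ρ) * (n : ℝ) ≤ ((agr x S).card : ℝ)}).ncard ≤ L

/-!
Call `G` bad if some nonzero codeword has at least `(R + ε / 2) n` zero coordinates, or if for
some lists `S` the images of `m ≈ 12 ℓ / (7 ε)` linearly independent messages all agree with `S`
on `(R + ε) n` coordinates. The images under a uniform `G` of linearly independent messages are
independent and uniform, so a union bound over messages (and lists) makes each event have
probability at most `q ^ (-ε n / 8)`.

For a good `G`, the codewords agreeing with `S` on `(R + ε) n` coordinates span a space `W` of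
dimension `< m`, all of whose nonzero vectors have few zeros. Averaging the agreements over such
a set `B` gives a coordinate `i` on which `W` does not vanish and a value `s ∈ S i` taken by at
least an `ε / (2 ℓ)` fraction of `B`; the words of `B` with `x i = s` lie in a coset of a smaller
space, so by induction `|B| ≤ (2 ℓ / ε) ^ dim W`.
-/

open Finset Module Submodule
open scoped Matrix

section Agreement

variable {F : Type*} [DecidableEq F] {n : ℕ}

lemma sum_card_agr (B : Finset (Fin n → F)) (S : Fin n → Finset F) :
    ∑ x ∈ B, #(agr x S) = ∑ i, #{x ∈ B | x i ∈ S i} := by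
  simp only [agr, card_filter]
  exact sum_comm

lemma card_filter_le_card_agr_le [Fintype F] (S : Fin n → Finset F) {b : ℕ}
    (hS : ∀ i, #(S i) ≤ b) (t : ℕ) :
    #{x : Fin n → F | t ≤ #(agr x S)} ≤ n.choose t * b ^ t * Fintype.card F ^ (n - t) := by
  let box (I : Finset (Fin n)) : Finset (Fin n → F) :=
    Fintype.piFinset fun i => if i ∈ I then S i else univ
  have hcover :
      ({x | t ≤ #(agr x S)} : Finset (Fin n → F)) ⊆ (powersetCard t univ).biUnion box := by
    intro x hx
    obtain ⟨I, hI, hIcard⟩ := exists_subset_card_eq (mem_filter.1 hx).2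
    refine mem_biUnion.2 ⟨I, mem_powersetCard.2 ⟨subset_univ _, hIcard⟩, ?_⟩
    refine Fintype.mem_piFinset.2 fun i => ?_
    split_ifs with hi
    · exact (mem_filter.1 (hI hi)).2
    · exact mem_univ _
  have hbox : ∀ I ∈ powersetCard t (univ : Finset (Fin n)),
      #(box I) ≤ b ^ t * Fintype.card F ^ (n - t) := by
    intro I hI
    obtain ⟨-, rfl⟩ := mem_powersetCard.1 hI
    calc #(box I) = ∏ i, #(if i ∈ I then S i else univ) := Fintype.card_piFinset _
      _ ≤ ∏ i, if i ∈ I then b else Fintype.card F :=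
          prod_le_prod' fun i _ => by split_ifs <;> simp [hS]
      _ = b ^ #I * Fintype.card F ^ (n - #I) := by
          simp [prod_ite, filter_notMem_eq_sdiff, card_univ_sdiff]
  calc #{x : Fin n → F | t ≤ #(agr x S)} ≤ #((powersetCard t univ).biUnion box) :=
        card_le_card hcover
    _ ≤ #(powersetCard t (univ : Finset (Fin n))) * (b ^ t * Fintype.card F ^ (n - t)) :=
        card_biUnion_le_card_mul _ _ _ hbox
    _ = n.choose t * b ^ t * Fintype.card F ^ (n - t) := by
        rw [card_powersetCard, card_univ, Fintype.card_fin, mul_assoc]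

end Agreement

lemma AddMonoidHom.card_filter_mem_mul_card {M N : Type*} [AddGroup M] [AddGroup N] [Fintype M]
    [Fintype N] [DecidableEq N] (φ : M →+ N) (hφ : Function.Surjective φ) (U : Finset N) :
    #{x | φ x ∈ U} * Fintype.card N = #U * Fintype.card M := by
  have hfiber (U : Finset N) : #{x | φ x ∈ U} = #U * #{x | φ x = 0} := by
    rw [← sum_card_fiberwise_eq_card_filter, sum_const_nat]
    exact fun z _ => AddMonoidHom.card_fiber_eq_of_mem_range φ (hφ z) (hφ 0)
  have huniv := hfiber univ
  simp only [mem_univ, filter_true, card_univ] at huniv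
  rw [hfiber, huniv, mul_comm (Fintype.card N), mul_assoc]

lemma Matrix.surjective_mulVec_of_linearIndependent {ι η κ F : Type*} [Field F] [Fintype ι]
    [Fintype κ] [DecidableEq κ] {y : ι → κ → F} (hy : LinearIndependent F y) :
    Function.Surjective fun G : Matrix η κ F => fun j => G *ᵥ y j := by
  classical
  obtain ⟨g, hg⟩ := (Fintype.linearCombination F y).exists_leftInverse_of_injective
    (LinearMap.ker_eq_bot.2 (linearIndependent_iff_injective_fintypeLinearCombination.1 hy))
  intro z
  refine ⟨LinearMap.toMatrix' (Fintype.linearCombination F z ∘ₗ g), funext fun j => ?_⟩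
  have hgy : g (y j) = Pi.single j 1 := by
    simpa using LinearMap.congr_fun hg (Pi.single j 1)
  simp [LinearMap.toMatrix'_mulVec, hgy]

lemma exists_linearIndependent_of_le_finrank_span {K V : Type*} [DivisionRing K]
    [AddCommGroup V] [Module K V] {s : Finset V} {m : ℕ}
    (h : m ≤ finrank K (span K (s : Set V))) :
    ∃ x : Fin m → V, (∀ j, x j ∈ s) ∧ LinearIndependent K x := by
  obtain ⟨b, hbs, hspan, hli⟩ := exists_linearIndependent K (s : Set V)
  have : Fintype b := (s.finite_toSet.subset hbs).fintype
  rw [← hspan, finrank_span_set_eq_card hli, Set.toFinset_card] at h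
  obtain ⟨e⟩ := Function.Embedding.nonempty_of_card_le (α := Fin m) (β := b) (by simpa using h)
  exact ⟨fun j => e j, fun j => hbs (e j).2, hli.comp e e.injective⟩

section RandomMatrix

variable {F : Type*} [Field F] [Fintype F] [DecidableEq F] {n k m : ℕ}

lemma card_filter_forall_mulVec_mem {y : Fin m → Fin k → F} (hy : LinearIndependent F y)
    (T : Finset (Fin n → F)) :
    (#{G : Matrix (Fin n) (Fin k) F | ∀ j, G *ᵥ y j ∈ T} : ℝ)
      = (#T / Fintype.card F ^ n) ^ m * Fintype.card (Matrix (Fin n) (Fin k) F) := by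
  let φ : Matrix (Fin n) (Fin k) F →+ (Fin m → Fin n → F) :=
    AddMonoidHom.pi fun j => Matrix.mulVec.addMonoidHomLeft (y j)
  have h := φ.card_filter_mem_mul_card (Matrix.surjective_mulVec_of_linearIndependent hy)
    (Fintype.piFinset fun _ => T)
  simp only [Fintype.mem_piFinset, Fintype.card_piFinset, prod_const, card_univ,
    Fintype.card_fin, Fintype.card_fun, φ, AddMonoidHom.pi_apply] at h
  have hq : (0 : ℝ) < Fintype.card F := by exact_mod_cast Fintype.card_pos
  rw [div_pow, div_mul_eq_mul_div, eq_div_iff (by positivity)]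
  exact_mod_cast h

def MapsIndependentIntoBall (G : Matrix (Fin n) (Fin k) F) (S : Fin n → Finset F) (m t : ℕ) :
    Prop :=
  ∃ y : Fin m → Fin k → F, LinearIndependent F y ∧ ∀ j, t ≤ #(agr (G *ᵥ y j) S)

open scoped Classical in
lemma card_mapsIndependentIntoBall_le (S : Fin n → Finset F) {b : ℕ} (hS : ∀ i, #(S i) ≤ b)
    {t : ℕ} (ht : t ≤ n) (m : ℕ) :
    (#{G : Matrix (Fin n) (Fin k) F | MapsIndependentIntoBall G S m t} : ℝ)
      ≤ ((Fintype.card F : ℝ) ^ k * 2 ^ n * (b / Fintype.card F) ^ t) ^ m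
        * Fintype.card (Matrix (Fin n) (Fin k) F) := by
  set q := Fintype.card F
  set N := Fintype.card (Matrix (Fin n) (Fin k) F)
  have hq : (0 : ℝ) < q := by exact_mod_cast Fintype.card_pos
  set T : Finset (Fin n → F) := {x | t ≤ #(agr x S)}
  have hT : #T / (q : ℝ) ^ n ≤ 2 ^ n * (b / q) ^ t := by
    have hTnat : #T ≤ 2 ^ n * b ^ t * q ^ (n - t) :=
      (card_filter_le_card_agr_le S hS t).trans (by gcongr; exact Nat.choose_le_two_pow n t)
    calc #T / (q : ℝ) ^ n ≤ 2 ^ n * b ^ t * (q : ℝ) ^ (n - t) / q ^ n := by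
          gcongr; exact_mod_cast hTnat
      _ = 2 ^ n * (b / q) ^ t := by rw [← pow_sub_mul_pow (q : ℝ) ht, div_pow]; field_simp
  let Y : Finset (Fin m → Fin k → F) := {y | LinearIndependent F y}
  have hY : (#Y : ℝ) ≤ ((q : ℝ) ^ k) ^ m := by
    calc (#Y : ℝ) ≤ Fintype.card (Fin m → Fin k → F) := by exact_mod_cast card_le_univ Y
      _ = ((q : ℝ) ^ k) ^ m := by simp [q]
  have hcover : ({G | MapsIndependentIntoBall G S m t} : Finset (Matrix (Fin n) (Fin k) F))
      ⊆ Y.biUnion fun y => {G | ∀ j, G *ᵥ y j ∈ T} := by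
    rintro G hG
    obtain ⟨y, hy, hyS⟩ := (mem_filter.1 hG).2
    exact mem_biUnion.2 ⟨y, mem_filter.2 ⟨mem_univ _, hy⟩,
      mem_filter.2 ⟨mem_univ _, fun j => mem_filter.2 ⟨mem_univ _, hyS j⟩⟩⟩
  calc (#{G : Matrix (Fin n) (Fin k) F | MapsIndependentIntoBall G S m t} : ℝ)
      ≤ ∑ y ∈ Y, (#{G : Matrix (Fin n) (Fin k) F | ∀ j, G *ᵥ y j ∈ T} : ℝ) := by
        exact_mod_cast (card_le_card hcover).trans card_biUnion_le
    _ = #Y * ((#T / (q : ℝ) ^ n) ^ m * N) := by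
        rw [← nsmul_eq_mul, ← sum_const]
        exact sum_congr rfl fun y hy => card_filter_forall_mulVec_mem (mem_filter.1 hy).2 T
    _ ≤ ((q : ℝ) ^ k) ^ m * ((2 ^ n * (b / q) ^ t) ^ m * N) := by gcongr
    _ = ((q : ℝ) ^ k * 2 ^ n * (b / q) ^ t) ^ m * N := by ring

end RandomMatrix

section Deterministic

variable {F : Type*} [Field F] [DecidableEq F] {n : ℕ}

lemma mul_card_le_of_le_card_agr {B : Finset (Fin n → F)} {S : Fin n → Finset F}
    {w : Fin n → F} {Z δ M : ℝ} (hw : (#{i | w i = 0} : ℝ) ≤ Z)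
    (hB : ∀ x ∈ B, Z + δ ≤ #(agr x S)) (hM0 : 0 ≤ M)
    (hM : ∀ i, w i ≠ 0 → (#{x ∈ B | x i ∈ S i} : ℝ) ≤ M) :
    δ * #B ≤ n * M := by
  have hzero : ∑ i with w i = 0, (#{x ∈ B | x i ∈ S i} : ℝ) ≤ Z * #B :=
    calc ∑ i with w i = 0, (#{x ∈ B | x i ∈ S i} : ℝ) ≤ ∑ i with w i = 0, (#B : ℝ) :=
          sum_le_sum fun i _ => by exact_mod_cast card_filter_le B _
      _ ≤ Z * #B := by rw [sum_const, nsmul_eq_mul]; gcongr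
  have hnonzero : ∑ i with w i ≠ 0, (#{x ∈ B | x i ∈ S i} : ℝ) ≤ n * M :=
    calc ∑ i with w i ≠ 0, (#{x ∈ B | x i ∈ S i} : ℝ) ≤ ∑ i with w i ≠ 0, M :=
          sum_le_sum fun i hi => hM i (mem_filter.1 hi).2
      _ ≤ n * M := by
          rw [sum_const, nsmul_eq_mul]
          gcongr
          exact_mod_cast (card_filter_le _ _).trans (card_univ.trans (Fintype.card_fin n)).le
  have hagr : (Z + δ) * #B ≤ ∑ i, (#{x ∈ B | x i ∈ S i} : ℝ) := by
    calc (Z + δ) * #B = ∑ _x ∈ B, (Z + δ) := by rw [sum_const, nsmul_eq_mul, mul_comm]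
      _ ≤ ∑ x ∈ B, (#(agr x S) : ℝ) := sum_le_sum hB
      _ = ∑ i, (#{x ∈ B | x i ∈ S i} : ℝ) := by exact_mod_cast sum_card_agr B S
  rw [← sum_filter_add_sum_filter_not univ fun i => w i = 0] at hagr
  linarith

lemma card_filter_mem_le_card_mul {α β : Type*} [DecidableEq β] (B : Finset α) (f : α → β)
    (T : Finset β) {M : ℝ} (h : ∀ s ∈ T, (#{x ∈ B | f x = s} : ℝ) ≤ M) :
    (#{x ∈ B | f x ∈ T} : ℝ) ≤ #T * M := by
  rw [← sum_card_fiberwise_eq_card_filter, Nat.cast_sum, ← nsmul_eq_mul, ← sum_const]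
  exact sum_le_sum h

theorem card_le_pow_of_sub_mem {Z δ K : ℝ} {ℓ : ℕ} (hδ : 0 < δ) (hK1 : 1 ≤ K)
    (hK : ℓ * n ≤ K * δ) {S : Fin n → Finset F} (hS : ∀ i, #(S i) ≤ ℓ) (d : ℕ) :
    ∀ W : Submodule F (Fin n → F), finrank F W ≤ d →
      (∀ w ∈ W, w ≠ 0 → (#{i | w i = 0} : ℝ) ≤ Z) →
      ∀ B : Finset (Fin n → F), (∀ x ∈ B, Z + δ ≤ #(agr x S)) →
        (∀ x ∈ B, ∀ y ∈ B, x - y ∈ W) → (#B : ℝ) ≤ K ^ d := by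
  induction d with
  | zero =>
    intro W hW _ B _ hBW
    rw [Nat.le_zero, finrank_eq_zero] at hW
    have : #B ≤ 1 := card_le_one.2 fun x hx y hy => by
      simpa [hW, sub_eq_zero] using hBW x hx y hy
    simpa using this
  | succ d ih =>
    intro W hW hZ B hB hBW
    rcases eq_or_ne W ⊥ with rfl | hW0
    · exact (ih ⊥ (by simp) hZ B hB hBW).trans (pow_le_pow_right₀ hK1 d.le_succ)
    obtain ⟨w, hwW, hw0⟩ := exists_mem_ne_zero_of_ne_bot hW0
    have hpiece : ∀ i, w i ≠ 0 → (#{x ∈ B | x i ∈ S i} : ℝ) ≤ ℓ * K ^ d := by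
      intro i hi
      have hlt : W ⊓ LinearMap.ker (LinearMap.proj i) < W := by
        refine inf_le_left.lt_of_ne fun h => hi ?_
        rw [← h] at hwW
        simpa using (mem_inf.1 hwW).2
      refine (card_filter_mem_le_card_mul B (· i) (S i) fun s _ => ?_).trans
        (by gcongr; exact_mod_cast hS i)
      refine ih _ (Nat.lt_succ_iff.1 ((finrank_lt_finrank_of_lt hlt).trans_le hW))
        (fun v hv => hZ v hv.1) _ (fun x hx => hB x (mem_filter.1 hx).1) fun x hx y hy => ?_
      rw [mem_filter] at hx hy
      exact ⟨hBW x hx.1 y hy.1, by simp [hx.2, hy.2]⟩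
    have hδB := mul_card_le_of_le_card_agr (hZ w hwW hw0) hB (by positivity) hpiece
    refine le_of_mul_le_mul_left ?_ hδ
    calc δ * #B ≤ n * (ℓ * K ^ d) := hδB
      _ = ℓ * n * K ^ d := by ring
      _ ≤ K * δ * K ^ d := by gcongr
      _ = δ * K ^ (d + 1) := by ring

theorem listRecoverable_of_forall_not_linearIndependent [Fintype F] (C : Submodule F (Fin n → F))
    {ρ Z δ K : ℝ} {ℓ m : ℕ} (hδ : 0 < δ) (hK1 : 1 ≤ K) (hK : ℓ * n ≤ K * δ)
    (hZ : Z + δ ≤ (1 - ρ) * n) (hdist : ∀ c ∈ C, c ≠ 0 → (#{i | c i = 0} : ℝ) ≤ Z)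
    (hindep : ∀ S : Fin n → Finset F, (∀ i, #(S i) = ℓ) → ∀ x : Fin m → Fin n → F,
      (∀ j, x j ∈ C ∧ (1 - ρ) * n ≤ #(agr (x j) S)) → ¬ LinearIndependent F x) :
    ListRecoverable (C : Set (Fin n → F)) ρ ℓ ⌊K ^ (m - 1)⌋₊ := by
  classical
  intro S hS
  let B : Finset (Fin n → F) := {x | x ∈ C ∧ (1 - ρ) * n ≤ #(agr x S)}
  have hrank : finrank F (span F (B : Set (Fin n → F))) ≤ m - 1 := by
    by_contra h
    obtain ⟨x, hxB, hx⟩ :=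
      exists_linearIndependent_of_le_finrank_span (K := F) (s := B) (m := m) (by omega)
    exact hindep S hS x (fun j => (mem_filter.1 (hxB j)).2) hx
  have hBC : span F (B : Set (Fin n → F)) ≤ C := span_le.2 fun x hx => (mem_filter.1 hx).2.1
  have hcard := card_le_pow_of_sub_mem hδ hK1 hK (fun i => (hS i).le) (m - 1) _ hrank
    (fun w hw => hdist w (hBC hw)) B (fun x hx => hZ.trans (mem_filter.1 hx).2.2)
    fun x hx y hy => sub_mem (subset_span hx) (subset_span hy)
  have hset : {x ∈ (C : Set (Fin n → F)) | (1 - ρ) * n ≤ #(agr x S)} = B := by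
    ext; simp [B]
  rw [hset, Set.ncard_coe_finset]
  exact Nat.le_floor hcard

end Deterministic

section Codewords

variable {F : Type*} [Field F] [DecidableEq F] {n k m : ℕ} {G : Matrix (Fin n) (Fin k) F}

lemma not_linearIndependent_of_not_mapsIndependentIntoBall {S : Fin n → Finset F} {x : ℝ}
    (hG : ¬ MapsIndependentIntoBall G S m ⌈x⌉₊) (c : Fin m → Fin n → F)
    (hc : ∀ j, c j ∈ LinearMap.range G.mulVecLin ∧ x ≤ #(agr (c j) S)) :
    ¬ LinearIndependent F c := by
  intro hli
  choose y hy using fun j => LinearMap.mem_range.1 (hc j).1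
  have hGy : G.mulVecLin ∘ y = c := funext hy
  refine hG ⟨y, LinearIndependent.of_comp G.mulVecLin (hGy ▸ hli), fun j => ?_⟩
  rw [← Matrix.mulVecLin_apply, hy j]
  exact Nat.ceil_le.2 (hc j).2

lemma card_eq_zero_le_of_not_mapsIndependentIntoBall {x : ℝ}
    (hG : ¬ MapsIndependentIntoBall G (fun _ => {0}) 1 ⌈x⌉₊) :
    ∀ c ∈ LinearMap.range G.mulVecLin, c ≠ 0 → (#{i | c i = 0} : ℝ) ≤ x := by
  intro c hc hc0
  by_contra h
  refine not_linearIndependent_of_not_mapsIndependentIntoBall hG (fun _ => c)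
    (fun _ => ⟨hc, ?_⟩) (linearIndependent_unique_iff.2 hc0)
  simpa [agr] using (not_le.1 h).le

end Codewords

lemma rpow_le_rpow_div_of_rpow_le {a c s Q : ℝ} (ha : 0 ≤ a) (hc : 0 < c) (hs : 0 ≤ s)
    (h : a ^ c ≤ Q) : a ^ s ≤ Q ^ (s / c) :=
  calc a ^ s = (a ^ c) ^ (s / c) := by rw [← Real.rpow_mul ha, mul_div_cancel₀ s hc.ne']
    _ ≤ Q ^ (s / c) := Real.rpow_le_rpow (Real.rpow_nonneg ha c) h (div_nonneg hs hc.le)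

lemma pow_mul_two_pow_mul_div_pow_le {R ε b x : ℝ} {q n k t : ℕ} (hε : 0 < ε)
    (hq : (2 : ℝ) ^ (4 / ε) ≤ q) (hk : (k : ℝ) = R * n) (hb : 0 < b) (hbq : b ≤ q)
    (hx : x ≤ t) :
    (q : ℝ) ^ k * 2 ^ n * (b / q) ^ t ≤ b ^ x * (q : ℝ) ^ (R * n + ε * n / 4 - x) := by
  have hq0 : (0 : ℝ) < q := hb.trans_le hbq
  have h2 : (2 : ℝ) ^ n ≤ (q : ℝ) ^ (ε * n / 4) := by
    have := rpow_le_rpow_div_of_rpow_le (s := n) zero_le_two (by positivity) n.cast_nonneg hq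
    rwa [Real.rpow_natCast, div_div_eq_mul_div, mul_comm] at this
  have hbt : (b / q) ^ t ≤ b ^ x * (q : ℝ) ^ (-x) := by
    calc (b / q) ^ t = (b / q) ^ (t : ℝ) := (Real.rpow_natCast _ t).symm
      _ ≤ (b / q) ^ x :=
          Real.rpow_le_rpow_of_exponent_ge (div_pos hb hq0) (div_le_one_of_le₀ hbq hq0.le) hx
      _ = b ^ x * (q : ℝ) ^ (-x) := by
          rw [Real.div_rpow hb.le hq0.le, Real.rpow_neg hq0.le, div_eq_mul_inv]
  calc (q : ℝ) ^ k * 2 ^ n * (b / q) ^ t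
      ≤ (q : ℝ) ^ (R * n) * (q : ℝ) ^ (ε * n / 4) * (b ^ x * (q : ℝ) ^ (-x)) := by
        rw [← hk, Real.rpow_natCast]; gcongr
    _ = b ^ x * (q : ℝ) ^ (R * n + ε * n / 4 - x) := by
        rw [sub_eq_add_neg, Real.rpow_add hq0, Real.rpow_add hq0]; ring

section Capacity

variable {F : Type*} [Field F] [Fintype F] [DecidableEq F] {R ε : ℝ} {q n k : ℕ}

open scoped Classical in
lemma card_mapsIndependentIntoBall_zero_le (hF : Fintype.card F = q) (hε : 0 < ε)
    (hRε : R + ε / 2 ≤ 1) (hq : (2 : ℝ) ^ (4 / ε) ≤ q) (hk : (k : ℝ) = R * n) :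
    (#{G : Matrix (Fin n) (Fin k) F |
        MapsIndependentIntoBall G (fun _ => {0}) 1 ⌈(R + ε / 2) * n⌉₊} : ℝ)
      ≤ (q : ℝ) ^ (-(ε * n) / 8) * Fintype.card (Matrix (Fin n) (Fin k) F) := by
  have hq1 : (1 : ℝ) ≤ q := (Real.one_le_rpow one_le_two (by positivity)).trans hq
  have ht : ⌈(R + ε / 2) * n⌉₊ ≤ n := Nat.ceil_le.2 (mul_le_of_le_one_left n.cast_nonneg hRε)
  refine (card_mapsIndependentIntoBall_le _ (b := 1) (fun _ => by simp) ht 1).trans ?_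
  rw [hF, pow_one, Nat.cast_one]
  gcongr
  refine (pow_mul_two_pow_mul_div_pow_le hε hq hk one_pos hq1 (Nat.le_ceil _)).trans ?_
  rw [Real.one_rpow, one_mul]
  have := mul_nonneg hε.le n.cast_nonneg
  exact Real.rpow_le_rpow_of_exponent_le hq1 (by linarith)

lemma card_piFinset_powersetCard_le {ι α : Type*} [Fintype ι] [DecidableEq ι] [Fintype α]
    (ℓ : ℕ) :
    #(Fintype.piFinset fun _ : ι => powersetCard ℓ (univ : Finset α))
      ≤ Fintype.card α ^ (ℓ * Fintype.card ι) := by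
  simp only [Fintype.card_piFinset, card_powersetCard, card_univ, prod_const, pow_mul]
  exact Nat.pow_le_pow_left (Nat.choose_le_pow _ ℓ) _

/-- The saving `7 / 12 = 1 - 1 / 4 - 1 / 6` comes from `2 ^ n ≤ q ^ (ε n / 4)` and from
`ℓ ^ ((R + ε) n) ≤ q ^ (ε n / 6)`, which is what the bound `ℓ ^ (8 R / ε + 6) ≤ q` is for. -/
lemma pow_mul_two_pow_mul_div_pow_ceil_le {ℓ : ℕ} (hR : 0 ≤ R) (hε : 0 < ε) (hℓ : 0 < ℓ)
    (hq1 : (ℓ : ℝ) ^ (8 * R / ε + 6) ≤ q) (hq2 : ℓ * (2 : ℝ) ^ (4 / ε) ≤ q)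
    (hk : (k : ℝ) = R * n) :
    (q : ℝ) ^ k * 2 ^ n * (ℓ / q) ^ ⌈(R + ε) * n⌉₊ ≤ (q : ℝ) ^ (-(7 / 12 * ε * n)) := by
  have hn : (0 : ℝ) ≤ n := n.cast_nonneg
  have hℓ1 : (1 : ℝ) ≤ ℓ := by exact_mod_cast hℓ
  have h2 : (1 : ℝ) ≤ 2 ^ (4 / ε) := Real.one_le_rpow one_le_two (by positivity)
  have hℓq : (ℓ : ℝ) ≤ q := (le_mul_of_one_le_right (by positivity) h2).trans hq2
  have hq1' : (1 : ℝ) ≤ q := hℓ1.trans hℓq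
  have hℓpow : (ℓ : ℝ) ^ ((R + ε) * n) ≤ (q : ℝ) ^ (ε * n / 6) := by
    refine (rpow_le_rpow_div_of_rpow_le (by positivity) (by positivity) (by positivity) hq1).trans
      (Real.rpow_le_rpow_of_exponent_le hq1' ?_)
    rw [div_le_iff₀ (by positivity), show ε * n / 6 * (8 * R / ε + 6) = 4 / 3 * R * n + ε * n by
      field_simp; ring]
    nlinarith [mul_nonneg hR hn]
  refine (pow_mul_two_pow_mul_div_pow_le hε ((le_mul_of_one_le_left (by positivity) hℓ1).trans hq2)
    hk (by positivity) hℓq (Nat.le_ceil _)).trans ?_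
  calc _ ≤ (q : ℝ) ^ (ε * n / 6) * (q : ℝ) ^ (R * n + ε * n / 4 - (R + ε) * n) := by gcongr
    _ = _ := by rw [← Real.rpow_add (by positivity)]; ring_nf

open scoped Classical in
lemma card_exists_mapsIndependentIntoBall_le {ℓ m : ℕ} (hF : Fintype.card F = q) (hR : 0 ≤ R)
    (hε : 0 < ε) (hRε : R + ε ≤ 1) (hℓ : 0 < ℓ) (hq1 : (ℓ : ℝ) ^ (8 * R / ε + 6) ≤ q)
    (hq2 : ℓ * (2 : ℝ) ^ (4 / ε) ≤ q) (hk : (k : ℝ) = R * n)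
    (hm : ℓ + ε / 8 ≤ 7 / 12 * ε * m) :
    (#{G : Matrix (Fin n) (Fin k) F | ∃ S : Fin n → Finset F, (∀ i, #(S i) = ℓ) ∧
        MapsIndependentIntoBall G S m ⌈(R + ε) * n⌉₊} : ℝ)
      ≤ (q : ℝ) ^ (-(ε * n) / 8) * Fintype.card (Matrix (Fin n) (Fin k) F) := by
  set t := ⌈(R + ε) * n⌉₊
  set N := Fintype.card (Matrix (Fin n) (Fin k) F)
  have hn : (0 : ℝ) ≤ n := n.cast_nonneg
  have hq1' : (1 : ℝ) ≤ q := by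
    have : (1 : ℝ) ≤ ℓ * 2 ^ (4 / ε) :=
      one_le_mul_of_one_le_of_one_le (by exact_mod_cast hℓ)
        (Real.one_le_rpow one_le_two (by positivity))
    linarith
  let lists : Finset (Fin n → Finset F) := Fintype.piFinset fun _ => powersetCard ℓ univ
  have hlists : (#lists : ℝ) ≤ (q : ℝ) ^ (ℓ * n) := by
    have := card_piFinset_powersetCard_le (ι := Fin n) (α := F) ℓ
    rw [hF, Fintype.card_fin] at this
    exact_mod_cast this
  have hcover : ({G | ∃ S : Fin n → Finset F, (∀ i, #(S i) = ℓ) ∧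
      MapsIndependentIntoBall G S m t} : Finset (Matrix (Fin n) (Fin k) F))
      ⊆ lists.biUnion fun S => {G | MapsIndependentIntoBall G S m t} := by
    intro G hG
    obtain ⟨S, hS, hGS⟩ := (mem_filter.1 hG).2
    exact mem_biUnion.2 ⟨S, Fintype.mem_piFinset.2 fun i => mem_powersetCard.2
      ⟨subset_univ _, hS i⟩, mem_filter.2 ⟨mem_univ _, hGS⟩⟩
  have ht : t ≤ n := Nat.ceil_le.2 (mul_le_of_le_one_left hn hRε)
  calc _ ≤ ∑ S ∈ lists,
          (#{G : Matrix (Fin n) (Fin k) F | MapsIndependentIntoBall G S m t} : ℝ) := by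
        exact_mod_cast (card_le_card hcover).trans card_biUnion_le
    _ ≤ ∑ _S ∈ lists, ((q : ℝ) ^ (-(7 / 12 * ε * n))) ^ m * N := by
        refine sum_le_sum fun S hS => (card_mapsIndependentIntoBall_le S (b := ℓ)
          (fun i => (mem_powersetCard.1 (Fintype.mem_piFinset.1 hS i)).2.le) ht m).trans ?_
        rw [hF]
        gcongr
        exact pow_mul_two_pow_mul_div_pow_ceil_le hR hε hℓ hq1 hq2 hk
    _ ≤ (q : ℝ) ^ (ℓ * n) * ((q : ℝ) ^ (-(7 / 12 * ε * n))) ^ m * N := by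
        rw [sum_const, nsmul_eq_mul, ← mul_assoc]
        gcongr
    _ = (q : ℝ) ^ ((ℓ * n : ℕ) - 7 / 12 * ε * n * m) * N := by
        rw [← Real.rpow_natCast _ (ℓ * n), ← Real.rpow_natCast _ m,
          ← Real.rpow_mul (by positivity), ← Real.rpow_add (by positivity)]
        ring_nf
    _ ≤ (q : ℝ) ^ (-(ε * n) / 8) * N := by
        refine mul_le_mul_of_nonneg_right (Real.rpow_le_rpow_of_exponent_le hq1' ?_) N.cast_nonneg
        push_cast
        nlinarith [mul_le_mul_of_nonneg_left hm hn]

end Capacity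

lemma one_sub_two_mul_le_ncard_div {α : Type*} [Fintype α] [Nonempty α] {P : Set α}
    {E₁ E₂ : Finset α} {p : ℝ} (hP : ∀ a, a ∉ E₁ → a ∉ E₂ → a ∈ P)
    (h₁ : (#E₁ : ℝ) ≤ p * Fintype.card α) (h₂ : (#E₂ : ℝ) ≤ p * Fintype.card α) :
    1 - 2 * p ≤ P.ncard / Fintype.card α := by
  classical
  have hcompl : Pᶜ.ncard ≤ #E₁ + #E₂ :=
    calc Pᶜ.ncard ≤ (↑(E₁ ∪ E₂) : Set α).ncard := Set.ncard_le_ncard (fun a ha => by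
          by_contra h
          simp only [coe_union, Set.mem_union, mem_coe, not_or] at h
          exact ha (hP a h.1 h.2)) (Set.toFinite _)
      _ ≤ #E₁ + #E₂ := (Set.ncard_coe_finset _).trans_le (card_union_le _ _)
  have hsum := Set.ncard_add_ncard_compl P
  rw [Nat.card_eq_fintype_card] at hsum
  rw [le_div_iff₀ (by exact_mod_cast Fintype.card_pos)]
  have : (Pᶜ.ncard : ℝ) ≤ #E₁ + #E₂ := by exact_mod_cast hcompl
  have : (P.ncard : ℝ) + Pᶜ.ncard = Fintype.card α := by exact_mod_cast hsum
  linarith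

lemma exists_nat_add_le_mul_and_sub_one_le {ℓ ε : ℝ} (hε : 0 < ε) (hεℓ : 3 * ε ≤ 4 * ℓ) :
    ∃ m : ℕ, ℓ + ε / 8 ≤ 7 / 12 * ε * m ∧ ((m - 1 : ℕ) : ℝ) ≤ 2 * ℓ / ε := by
  refine ⟨⌈12 * ℓ / (7 * ε) + 3 / 14⌉₊, ?_, ?_⟩
  · have := Nat.le_ceil (12 * ℓ / (7 * ε) + 3 / 14)
    calc ℓ + ε / 8 = 7 / 12 * ε * (12 * ℓ / (7 * ε) + 3 / 14) := by field_simp; ring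
      _ ≤ _ := by gcongr
  · have hpos : 0 < 12 * ℓ / (7 * ε) + 3 / 14 := by
      have : 0 ≤ ℓ := by linarith
      positivity
    have hle : 12 * ℓ / (7 * ε) + 3 / 14 ≤ 2 * ℓ / ε := by
      rw [div_add' _ _ _ (by positivity), div_le_div_iff₀ (by positivity) hε]
      nlinarith
    rw [Nat.cast_pred (Nat.ceil_pos.2 hpos)]
    linarith [Nat.ceil_lt_add_one hpos.le]

theorem random_linear_codes_achieve_list_recovery_capacity_general
    (R ε : ℝ) (hR0 : 0 < R) (hε : 0 < ε) (hcap : 0 < 1 - R - ε)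
    (ℓ : ℕ) (hℓ : 0 < ℓ) (q : ℕ)
    (F : Type*) [Field F] [Fintype F] [DecidableEq F] (hF : Fintype.card F = q)
    (hq1 : ((ℓ : ℝ)) ^ (8 * R / ε + 6 : ℝ) ≤ (q : ℝ))
    (hq2 : (ℓ : ℝ) * (2 : ℝ) ^ (4 / ε : ℝ) ≤ (q : ℝ))
    (n k : ℕ) (hn : 0 < n) (hk : (k : ℝ) = R * n) :
    1 - 2 * (q : ℝ) ^ (-(ε * (n : ℝ)) / 8 : ℝ) ≤
      (({G : Matrix (Fin n) (Fin k) F |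
          ∃ L : ℕ, (L : ℝ) ≤ (2 * (ℓ : ℝ) / ε) ^ (2 * (ℓ : ℝ) / ε) ∧
            ListRecoverable (LinearMap.range (Matrix.mulVecLin G) : Set (Fin n → F))
              (1 - R - ε) ℓ L}).ncard : ℝ) /
        ((Fintype.card (Matrix (Fin n) (Fin k) F)) : ℝ) := by
  classical
  have hℓ1 : (1 : ℝ) ≤ ℓ := by exact_mod_cast hℓ
  have hK1 : 1 ≤ 2 * (ℓ : ℝ) / ε := by rw [le_div_iff₀ hε]; linarith
  have hn' : (0 : ℝ) < n := by exact_mod_cast hn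
  obtain ⟨m, hm, hmK⟩ := exists_nat_add_le_mul_and_sub_one_le (ℓ := ℓ) hε (by linarith)
  have hq2' : (2 : ℝ) ^ (4 / ε) ≤ q :=
    (le_mul_of_one_le_left (by positivity) hℓ1).trans hq2
  refine one_sub_two_mul_le_ncard_div (fun G hG₁ hG₂ => ⟨⌊(2 * ℓ / ε) ^ (m - 1)⌋₊, ?_, ?_⟩)
    (card_mapsIndependentIntoBall_zero_le hF hε (by linarith) hq2' hk)
    (card_exists_mapsIndependentIntoBall_le hF hR0.le hε (by linarith) hℓ hq1 hq2 hk hm)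
  · calc (⌊(2 * ℓ / ε) ^ (m - 1)⌋₊ : ℝ) ≤ (2 * ℓ / ε) ^ (m - 1) := Nat.floor_le (by positivity)
      _ ≤ (2 * ℓ / ε) ^ (2 * (ℓ : ℝ) / ε) := by
        rw [← Real.rpow_natCast]; exact Real.rpow_le_rpow_of_exponent_le hK1 hmK
  · simp only [mem_filter, mem_univ, true_and, not_exists, not_and] at hG₁ hG₂
    refine listRecoverable_of_forall_not_linearIndependent _ (Z := (R + ε / 2) * n)
      (δ := ε * n / 2) (by positivity) hK1 (le_of_eq (by field_simp)) (by linarith)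
      (card_eq_zero_le_of_not_mapsIndependentIntoBall hG₁) fun S hS => ?_
    rw [show 1 - (1 - R - ε) = R + ε by ring]
    exact not_linearIndependent_of_not_mapsIndependentIntoBall (hG₂ S hS)

/-- Random linear codes over alphabets of size `q ≥ max(ℓ^{8R/ε+6}, ℓ·2^{4/ε})` achieve
list-recovery capacity with output list size `(2ℓ/ε)^{2ℓ/ε}`, with probability at least
`1 - 2q^{-εn/8}` over the uniformly random generator matrix `G ∈ F_q^{n × Rn}`. -/
theorem random_linear_codes_achieve_list_recovery_capacity
    (R ε : ℝ) (hR0 : 0 < R) (hR1 : R < 1) (hε : 0 < ε) (hcap : 0 < 1 - R - ε)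
    (ℓ : ℕ) (hℓ : 0 < ℓ) (q : ℕ)
    (F : Type*) [Field F] [Fintype F] [DecidableEq F] (hF : Fintype.card F = q)
    (hq1 : ((ℓ : ℝ)) ^ (8 * R / ε + 6 : ℝ) ≤ (q : ℝ))
    (hq2 : (ℓ : ℝ) * (2 : ℝ) ^ (4 / ε : ℝ) ≤ (q : ℝ))
    (n k : ℕ) (hn : 0 < n) (hk : (k : ℝ) = R * n) :
    1 - 2 * (q : ℝ) ^ (-(ε * (n : ℝ)) / 8 : ℝ) ≤
      (({G : Matrix (Fin n) (Fin k) F |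
          ∃ L : ℕ, (L : ℝ) ≤ (2 * (ℓ : ℝ) / ε) ^ (2 * (ℓ : ℝ) / ε) ∧
            ListRecoverable (LinearMap.range (Matrix.mulVecLin G) : Set (Fin n → F))
              (1 - R - ε) ℓ L}).ncard : ℝ) /
        ((Fintype.card (Matrix (Fin n) (Fin k) F)) : ℝ) :=
  random_linear_codes_achieve_list_recovery_capacity_general R ε hR0 hε hcap ℓ hℓ q F hF hq1 hq2 n k
    hn hk
end

section
/- Fix 0 < R < 1 and ε > 0 with 1 - R - ε > 0, a positive integer ℓ, and a prime power q with q ≥ max(ℓ^{8R/ε + 6}, ℓ·2^{4/ε}). Let n be a positive integer with Rn an integer, and let C ⊆ F_q^n be a random linear code of rate R. Then with probability at least 1 - q^{-nℓ/4}, the following holds: for every choice of input lists S_1,…,S_n ⊆ F_q with |S_i| = ℓ for all i, every linearly independent subset of C contained in the (1-R-ε)-radius list-recovery ball B(1-R-ε, S_1×⋯×S_n) has size strictly less than 2ℓ/ε. -/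
open Finset Matrix

theorem one_sub_le_ncard_div_card {α : Type*} [Fintype α] [Nonempty α] {P : α → Prop}
    [DecidablePred P] {δ : ℝ} (h : (#{a | ¬P a} : ℝ) ≤ δ * Fintype.card α) :
    1 - δ ≤ ({a | P a}.ncard : ℝ) / Fintype.card α := by
  have hcard : (#{a | P a} : ℝ) + #{a | ¬P a} = Fintype.card α := by
    exact_mod_cast card_filter_add_card_filter_not (s := univ) P
  rw [Set.ncard_eq_toFinset_card', Set.toFinset_ofPred, le_div_iff₀ (by positivity)]
  linarith

theorem AddMonoidHom.card_fiber_mul_card_of_surjective {G M : Type*} [AddGroup G] [Fintype G]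
    [AddMonoid M] [Fintype M] [DecidableEq M] (f : G →+ M) (hf : Function.Surjective f) (x : M) :
    #{g | f g = x} * Fintype.card M = Fintype.card G := by
  rw [← card_univ (α := G),
    card_eq_sum_card_fiberwise (s := univ) (t := univ) fun g _ => mem_univ (f g),
    sum_congr rfl fun y _ => card_fiber_eq_of_mem_range f (hf y) (hf x), sum_const, card_univ,
    smul_eq_mul, mul_comm]

theorem LinearMap.exists_linearIndependent_comp_mem {K V W : Type*} [DivisionRing K]
    [AddCommGroup V] [Module K V] [AddCommGroup W] [Module K W] (f : V →ₗ[K] W) {T : Finset W}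
    (hT : (T : Set W) ⊆ LinearMap.range f) (hind : LinearIndependent K ((↑) : T → W)) {m : ℕ}
    (hm : m ≤ #T) : ∃ u : Fin m → V, LinearIndependent K u ∧ ∀ j, f (u j) ∈ T := by
  let e : Fin m ↪ T := (Fin.castLEEmb hm).trans T.equivFin.symm.toEmbedding
  choose v hv using fun t : T => hT t.2
  refine ⟨v ∘ e, LinearIndependent.of_comp f ?_, fun j => by simp [hv]⟩
  convert hind.comp e e.injective
  ext j : 1
  simp [hv]

theorem Fintype.card_matrix (ι κ α : Type*) [Fintype ι] [DecidableEq ι] [Fintype κ]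
    [DecidableEq κ] [Fintype α] :
    Fintype.card (Matrix ι κ α) = Fintype.card α ^ (Fintype.card κ * Fintype.card ι) := by
  rw [← Fintype.card_congr Matrix.of, Fintype.card_fun, Fintype.card_fun, pow_mul]

section MatrixFibers

variable {F ι κ μ : Type*} [Field F] [Fintype κ] [DecidableEq κ] [Fintype μ] [DecidableEq μ]

theorem Matrix.exists_mulVec_eq_of_linearIndependent {u : μ → κ → F} (hu : LinearIndependent F u)
    (x : μ → ι → F) : ∃ G : Matrix ι κ F, ∀ j, G *ᵥ u j = x j := by
  obtain ⟨g, hg⟩ := (Fintype.linearCombination F u).exists_leftInverse_of_injective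
    (LinearMap.ker_eq_bot.2 hu.fintypeLinearCombination_injective)
  refine ⟨LinearMap.toMatrix' (Fintype.linearCombination F x ∘ₗ g), fun j => ?_⟩
  have hgu : g (u j) = Pi.single j 1 := by
    simpa using LinearMap.congr_fun hg (Pi.single j 1)
  simp [LinearMap.toMatrix'_mulVec, hgu]

theorem Matrix.card_filter_mulVec_eq_mul_card [Fintype ι] [DecidableEq ι] [Fintype F]
    [DecidableEq F] {u : μ → κ → F} (hu : LinearIndependent F u) (x : μ → ι → F) :
    #{G : Matrix ι κ F | ∀ j, G *ᵥ u j = x j} * Fintype.card (μ → ι → F) =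
      Fintype.card (Matrix ι κ F) := by
  let f : Matrix ι κ F →+ (μ → ι → F) := AddMonoidHom.pi fun j => mulVec.addMonoidHomLeft (u j)
  have hf : Function.Surjective f := fun x =>
    (exists_mulVec_eq_of_linearIndependent hu x).imp fun _ h => funext h
  rw [← f.card_fiber_mul_card_of_surjective hf x]
  simp [f, funext_iff]

open Classical in
theorem Matrix.card_mul_card_le_of_forall_exists_linearIndependent [Fintype ι] [DecidableEq ι]
    [Fintype F] {x : μ → ι → F} {s : Finset (Matrix ι κ F)}
    (hs : ∀ G ∈ s, ∃ u : μ → κ → F, LinearIndependent F u ∧ ∀ j, G *ᵥ u j = x j) :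
    #s * Fintype.card (μ → ι → F) ≤ Fintype.card (μ → κ → F) * Fintype.card (Matrix ι κ F) := by
  have hsub : s ⊆ ({u | LinearIndependent F u} : Finset (μ → κ → F)).biUnion
      fun u => {G | ∀ j, G *ᵥ u j = x j} := by
    intro G hG
    obtain ⟨u, hu, hGu⟩ := hs G hG
    exact mem_biUnion.2 ⟨u, (mem_filter_univ _).2 hu, (mem_filter_univ _).2 hGu⟩
  calc _ ≤ (∑ u ∈ ({u | LinearIndependent F u} : Finset (μ → κ → F)),
          #{G : Matrix ι κ F | ∀ j, G *ᵥ u j = x j}) * Fintype.card (μ → ι → F) := by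
        gcongr
        exact (card_le_card hsub).trans card_biUnion_le
    _ = ∑ u ∈ ({u | LinearIndependent F u} : Finset (μ → κ → F)), Fintype.card (Matrix ι κ F) := by
        rw [sum_mul]
        exact sum_congr rfl fun u hu => card_filter_mulVec_eq_mul_card (by simpa using hu) x
    _ ≤ _ := by
        rw [sum_const, smul_eq_mul]
        gcongr
        exact card_le_univ _

end MatrixFibers

theorem card_piFinset_ite_mem {F : Type*} [Fintype F] {n ℓ : ℕ} {S : Fin n → Finset F}
    (hS : ∀ i, #(S i) = ℓ) (hq : Fintype.card F ≠ 0) (A : Finset (Fin n)) :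
    (#(Fintype.piFinset fun i => if i ∈ A then S i else univ) : ℝ) =
      (Fintype.card F : ℝ) ^ n * (ℓ / Fintype.card F : ℝ) ^ #A := by
  have hq' : (Fintype.card F : ℝ) ≠ 0 := by exact_mod_cast hq
  rw [Fintype.card_piFinset, Nat.cast_prod]
  calc ∏ i, ((#(if i ∈ A then S i else univ) : ℕ) : ℝ)
      = ∏ i, (Fintype.card F * if i ∈ A then (ℓ / Fintype.card F : ℝ) else 1) := by
        refine prod_congr rfl fun i _ => ?_
        split_ifs <;> field_simp <;> simp [hS]
    _ = _ := by rw [prod_mul_distrib, prod_const, prod_ite_mem, univ_inter, prod_const, card_univ,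
        Fintype.card_fin]

section ListRecoveryBall

variable {F : Type*} [Fintype F] [DecidableEq F] {n ℓ : ℕ}

/-- `agrBall θ S` is the list-recovery ball `B(1 - θ, S₁ × ⋯ × Sₙ)`. -/
noncomputable def agrBall (θ : ℝ) (S : Fin n → Finset F) : Finset (Fin n → F) :=
  {x | θ * n ≤ #(agr x S)}

theorem agrBall_subset_biUnion (θ : ℝ) (S : Fin n → Finset F) :
    agrBall θ S ⊆ ({A | θ * n ≤ #A} : Finset (Finset (Fin n))).biUnion
      fun A => Fintype.piFinset fun i => if i ∈ A then S i else univ := by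
  intro x hx
  simp only [agrBall, mem_filter_univ] at hx
  refine mem_biUnion.2 ⟨agr x S, by simpa using hx, Fintype.mem_piFinset.2 fun i => ?_⟩
  split_ifs with hi
  · simpa [agr] using hi
  · exact mem_univ _

theorem card_agrBall_le (θ : ℝ) (hℓ : 0 < ℓ) (hℓq : ℓ ≤ Fintype.card F) {S : Fin n → Finset F}
    (hS : ∀ i, #(S i) = ℓ) :
    (#(agrBall θ S) : ℝ) ≤ (2 * Fintype.card F * (ℓ / Fintype.card F : ℝ) ^ θ) ^ n := by
  have hq : 0 < Fintype.card F := hℓ.trans_le hℓq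
  set q : ℝ := (Fintype.card F : ℝ)
  have hρ : 0 < (ℓ / q : ℝ) := by positivity
  have hρ1 : (ℓ / q : ℝ) ≤ 1 := div_le_one_of_le₀ (Nat.cast_le.2 hℓq) (by positivity)
  calc (#(agrBall θ S) : ℝ)
      ≤ ∑ A ∈ ({A | θ * n ≤ #A} : Finset (Finset (Fin n))),
          (#(Fintype.piFinset fun i => if i ∈ A then S i else univ) : ℝ) := by
        exact_mod_cast (card_le_card (agrBall_subset_biUnion θ S)).trans card_biUnion_le
    _ ≤ ∑ A ∈ ({A | θ * n ≤ #A} : Finset (Finset (Fin n))), q ^ n * (ℓ / q) ^ (θ * n) := by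
        refine sum_le_sum fun A hA => ?_
        rw [card_piFinset_ite_mem hS hq.ne' A, ← Real.rpow_natCast (ℓ / q)]
        refine mul_le_mul_of_nonneg_left ?_ (by positivity)
        exact Real.rpow_le_rpow_of_exponent_ge hρ hρ1 (by simpa using hA)
    _ ≤ 2 ^ n * (q ^ n * (ℓ / q) ^ (θ * n)) := by
        rw [sum_const, nsmul_eq_mul]
        gcongr
        exact_mod_cast (card_le_univ _).trans (by simp)
    _ = (2 * q * (ℓ / q) ^ θ) ^ n := by
        rw [mul_pow, mul_pow, ← Real.rpow_natCast ((ℓ / q) ^ θ), ← Real.rpow_mul hρ.le]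
        ring

end ListRecoveryBall

section RandomLinearCode

variable {F : Type*} [Field F] [Fintype F] [DecidableEq F] {n k : ℕ}

open Classical in
noncomputable def matricesWithIndependentCodewordsInBall (θ : ℝ) (ℓ m : ℕ) :
    Finset (Matrix (Fin n) (Fin k) F) :=
  (Fintype.piFinset fun _ : Fin n => powersetCard ℓ (univ : Finset F)).biUnion fun S =>
    (Fintype.piFinset fun _ : Fin m => agrBall θ S).biUnion fun x =>
      {G | ∃ u : Fin m → Fin k → F, LinearIndependent F u ∧ ∀ j, G *ᵥ u j = x j}

theorem mem_matricesWithIndependentCodewordsInBall {θ : ℝ} {ℓ m : ℕ}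
    {G : Matrix (Fin n) (Fin k) F} {S : Fin n → Finset F} (hS : ∀ i, #(S i) = ℓ)
    {T : Finset (Fin n → F)} (hT : (T : Set (Fin n → F)) ⊆ LinearMap.range G.mulVecLin)
    (hagr : ∀ x ∈ T, θ * n ≤ #(agr x S))
    (hind : LinearIndependent F ((↑) : T → Fin n → F)) (hm : m ≤ #T) :
    G ∈ matricesWithIndependentCodewordsInBall θ ℓ m := by
  obtain ⟨u, hu, huT⟩ := G.mulVecLin.exists_linearIndependent_comp_mem hT hind hm
  simp only [matricesWithIndependentCodewordsInBall, mem_biUnion, Fintype.mem_piFinset,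
    mem_powersetCard_univ, mem_filter_univ]
  refine ⟨S, hS, fun j => G *ᵥ u j, fun j => ?_, u, hu, fun j => rfl⟩
  simpa [agrBall] using hagr _ (huT j)

open Classical in
theorem card_matricesWithIndependentCodewordsInBall_mul_le (θ : ℝ) {ℓ : ℕ} (hℓ : 0 < ℓ)
    (hℓq : ℓ ≤ Fintype.card F) (m : ℕ) :
    (#(matricesWithIndependentCodewordsInBall θ ℓ m : Finset (Matrix (Fin n) (Fin k) F)) : ℝ) *
        (Fintype.card F : ℝ) ^ (n * m) ≤
      (Fintype.card F : ℝ) ^ (ℓ * n) *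
        (2 * Fintype.card F * (ℓ / Fintype.card F : ℝ) ^ θ) ^ (n * m) *
          (Fintype.card F : ℝ) ^ (k * m) * (Fintype.card F : ℝ) ^ (k * n) := by
  set q : ℝ := (Fintype.card F : ℝ)
  set SS := Fintype.piFinset fun _ : Fin n => powersetCard ℓ (univ : Finset F)
  set E : (Fin m → Fin n → F) → Finset (Matrix (Fin n) (Fin k) F) := fun x =>
    {G | ∃ u : Fin m → Fin k → F, LinearIndependent F u ∧ ∀ j, G *ᵥ u j = x j}
  have hSS : (#SS : ℝ) ≤ q ^ (ℓ * n) := by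
    simp only [SS, Fintype.card_piFinset, card_powersetCard, card_univ, prod_const,
      Fintype.card_fin, q, pow_mul]
    exact_mod_cast Nat.pow_le_pow_left (Nat.choose_le_pow _ _) n
  have hE : ∀ x, (#(E x) : ℝ) * q ^ (n * m) ≤ q ^ (k * m) * q ^ (k * n) := fun x => by
    have := card_mul_card_le_of_forall_exists_linearIndependent (s := E x)
      fun G hG => by simpa [E] using hG
    simp only [Fintype.card_matrix, Fintype.card_fun, Fintype.card_fin, ← pow_mul] at this
    simp only [q]
    exact_mod_cast this
  calc _ ≤ (∑ S ∈ SS, ∑ x ∈ Fintype.piFinset fun _ : Fin m => agrBall θ S, (#(E x) : ℝ)) *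
        q ^ (n * m) := by
        gcongr
        exact_mod_cast card_biUnion_le.trans (sum_le_sum fun S _ => card_biUnion_le)
    _ ≤ ∑ S ∈ SS, ∑ x ∈ Fintype.piFinset fun _ : Fin m => agrBall θ S,
          q ^ (k * m) * q ^ (k * n) := by
        simp only [sum_mul]
        exact sum_le_sum fun S _ => sum_le_sum fun x _ => hE x
    _ = ∑ S ∈ SS, (#(agrBall θ S) : ℝ) ^ m * (q ^ (k * m) * q ^ (k * n)) := by
        simp [Fintype.card_piFinset]
    _ ≤ ∑ S ∈ SS, ((2 * q * (ℓ / q) ^ θ) ^ n) ^ m * (q ^ (k * m) * q ^ (k * n)) := by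
        gcongr with S hS
        exact card_agrBall_le θ hℓ hℓq (by simpa [SS] using hS)
    _ = #SS * (((2 * q * (ℓ / q) ^ θ) ^ n) ^ m * (q ^ (k * m) * q ^ (k * n))) := by
        rw [sum_const, nsmul_eq_mul]
    _ ≤ q ^ (ℓ * n) * (((2 * q * (ℓ / q) ^ θ) ^ n) ^ m * (q ^ (k * m) * q ^ (k * n))) := by
        gcongr
    _ = _ := by ring

end RandomLinearCode

theorem two_mul_rpow_le_rpow_of_le {R ε ℓ q : ℝ} (hε : 0 < ε) (hℓ : 0 < ℓ)
    (hq1 : ℓ ^ (8 * R / ε + 6) ≤ q) (hq2 : ℓ * 2 ^ (4 / ε) ≤ q) :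
    2 * ℓ ^ (R + ε) ≤ q ^ (3 * ε / 8) := by
  have hq : 0 ≤ q := (by positivity : 0 ≤ ℓ * (2 : ℝ) ^ (4 / ε)).trans hq2
  have h1 : ℓ ^ (R + 3 * ε / 4) ≤ q ^ (ε / 8) := by
    calc ℓ ^ (R + 3 * ε / 4) = (ℓ ^ (8 * R / ε + 6)) ^ (ε / 8) := by
          rw [← Real.rpow_mul hℓ.le]; congr 1; field_simp; ring
      _ ≤ q ^ (ε / 8) := by gcongr
  have h2 : ℓ ^ (ε / 4) * 2 ≤ q ^ (ε / 4) := by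
    calc ℓ ^ (ε / 4) * 2 = (ℓ * 2 ^ (4 / ε)) ^ (ε / 4) := by
          rw [Real.mul_rpow hℓ.le (by positivity), ← Real.rpow_mul (by norm_num)]
          field_simp; simp
      _ ≤ q ^ (ε / 4) := by gcongr
  calc 2 * ℓ ^ (R + ε) = ℓ ^ (R + 3 * ε / 4) * (ℓ ^ (ε / 4) * 2) := by
        rw [← mul_assoc, mul_comm, ← Real.rpow_add hℓ]; ring_nf
    _ ≤ q ^ (ε / 8) * q ^ (ε / 4) := by gcongr
    _ = q ^ (3 * ε / 8) := by rw [← Real.rpow_add' hq (by positivity)]; ring_nf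

theorem pow_mul_pow_mul_pow_le_rpow_mul_pow {R ε Q : ℝ} {ℓ n k m : ℕ} (hQ : 1 ≤ Q)
    (hℓQ : 2 * (ℓ : ℝ) ^ (R + ε) ≤ Q ^ (3 * ε / 8)) (hk : (k : ℝ) = R * n)
    (hm : 2 * (ℓ : ℝ) ≤ ε * m) :
    Q ^ (ℓ * n) * (2 * Q * (ℓ / Q) ^ (R + ε)) ^ (n * m) * Q ^ (k * m) ≤
      Q ^ (-((n : ℝ) * ℓ) / 4) * Q ^ (n * m) := by
  have hQ0 : 0 < Q := one_pos.trans_le hQ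
  have hbase : 2 * Q * (ℓ / Q) ^ (R + ε) * Q ^ R ≤ Q ^ (1 - 5 * ε / 8) :=
    calc 2 * Q * (ℓ / Q) ^ (R + ε) * Q ^ R = 2 * (ℓ : ℝ) ^ (R + ε) * Q ^ (1 - ε) := by
          rw [Real.div_rpow (by positivity) hQ0.le, Real.rpow_sub hQ0, Real.rpow_add hQ0,
            Real.rpow_one]
          field_simp
      _ ≤ Q ^ (3 * ε / 8) * Q ^ (1 - ε) := by gcongr
      _ = Q ^ (1 - 5 * ε / 8) := by rw [← Real.rpow_add hQ0]; ring_nf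
  have hQk : Q ^ (k * m) = (Q ^ R) ^ (n * m) := by
    rw [pow_mul, pow_mul, ← Real.rpow_natCast Q k, hk, Real.rpow_mul hQ0.le, Real.rpow_natCast]
  calc Q ^ (ℓ * n) * (2 * Q * (ℓ / Q) ^ (R + ε)) ^ (n * m) * Q ^ (k * m)
      = Q ^ (ℓ * n) * (2 * Q * (ℓ / Q) ^ (R + ε) * Q ^ R) ^ (n * m) := by
        rw [hQk, mul_pow]; ring
    _ ≤ Q ^ (ℓ * n) * (Q ^ (1 - 5 * ε / 8)) ^ (n * m) := by gcongr
    _ = Q ^ ((ℓ * n : ℕ) + (1 - 5 * ε / 8) * (n * m : ℕ)) := by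
        rw [Real.rpow_add hQ0, Real.rpow_mul hQ0.le, Real.rpow_natCast, Real.rpow_natCast]
    _ ≤ Q ^ (-((n : ℝ) * ℓ) / 4 + (n * m : ℕ)) := by
        refine Real.rpow_le_rpow_of_exponent_le hQ ?_
        push_cast
        nlinarith [mul_le_mul_of_nonneg_left hm (Nat.cast_nonneg (α := ℝ) n)]
    _ = Q ^ (-((n : ℝ) * ℓ) / 4) * Q ^ (n * m) := by rw [Real.rpow_add hQ0, Real.rpow_natCast]

theorem random_linear_code_few_independent_codewords_in_list_recovery_ball_general
    (R ε : ℝ) (hε : 0 < ε)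
    (ℓ : ℕ) (hℓ : 0 < ℓ) (q : ℕ)
    (F : Type*) [Field F] [Fintype F] [DecidableEq F] (hF : Fintype.card F = q)
    (hq1 : ((ℓ : ℝ)) ^ (8 * R / ε + 6 : ℝ) ≤ (q : ℝ))
    (hq2 : (ℓ : ℝ) * (2 : ℝ) ^ (4 / ε : ℝ) ≤ (q : ℝ))
    (n k : ℕ) (hk : (k : ℝ) = R * n) :
    1 - (q : ℝ) ^ (-((n : ℝ) * (ℓ : ℝ)) / 4 : ℝ) ≤
      (({G : Matrix (Fin n) (Fin k) F |
          ∀ S : Fin n → Finset F, (∀ i, (S i).card = ℓ) →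
            ∀ T : Finset (Fin n → F),
              (↑T : Set (Fin n → F)) ⊆ (LinearMap.range (Matrix.mulVecLin G) : Set (Fin n → F)) →
              (∀ x ∈ T, (1 - (1 - R - ε)) * (n : ℝ) ≤ ((agr x S).card : ℝ)) →
              LinearIndependent F (fun x : {y // y ∈ T} => (x : Fin n → F)) →
              (T.card : ℝ) < 2 * (ℓ : ℝ) / ε}).ncard : ℝ) /
        ((Fintype.card (Matrix (Fin n) (Fin k) F)) : ℝ) := by
  classical
  subst hF
  rw [show 1 - (1 - R - ε) = R + ε by ring]
  have hℓq : ℓ ≤ Fintype.card F := by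
    have h2 : (1 : ℝ) ≤ 2 ^ (4 / ε) := Real.one_le_rpow (by norm_num) (by positivity)
    exact_mod_cast (le_mul_of_one_le_right (by positivity) h2).trans hq2
  have hQ : (1 : ℝ) ≤ Fintype.card F := by exact_mod_cast hℓ.trans_le hℓq
  set m := ⌈2 * (ℓ : ℝ) / ε⌉₊
  have hm : 2 * (ℓ : ℝ) ≤ ε * m := by
    have := Nat.le_ceil (2 * (ℓ : ℝ) / ε)
    rw [div_le_iff₀ hε] at this
    linarith
  have hcount := (card_matricesWithIndependentCodewordsInBall_mul_le (R + ε) hℓ hℓq m).trans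
    (mul_le_mul_of_nonneg_right (pow_mul_pow_mul_pow_le_rpow_mul_pow hQ
      (two_mul_rpow_le_rpow_of_le hε (by positivity) hq1 hq2) hk hm) (by positivity))
  refine one_sub_le_ncard_div_card ((Nat.cast_le.2 (card_le_card
    (t := matricesWithIndependentCodewordsInBall (R + ε) ℓ m) fun G hG => ?_)).trans ?_)
  · simp only [mem_filter_univ, not_forall, not_lt] at hG
    obtain ⟨S, hS, T, hT, hagr, hind, hcard⟩ := hG
    exact mem_matricesWithIndependentCodewordsInBall hS hT hagr hind (Nat.ceil_le.2 hcard)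
  · rw [Fintype.card_matrix, Fintype.card_fin, Fintype.card_fin, Nat.cast_pow]
    exact le_of_mul_le_mul_right (hcount.trans_eq (by ring)) (by positivity)

/-- With probability at least `1 - q^{-nℓ/4}` over the uniformly random generator matrix
`G ∈ F_q^{n × Rn}`, for every choice of input lists `S₁,…,Sₙ ⊆ F_q` of size `ℓ`, every
linearly independent subset of the random linear code contained in the `(1-R-ε)`-radius
list-recovery ball has size strictly less than `2ℓ/ε`. -/
theorem random_linear_code_few_independent_codewords_in_list_recovery_ball
    (R ε : ℝ) (hR0 : 0 < R) (hR1 : R < 1) (hε : 0 < ε) (hcap : 0 < 1 - R - ε)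
    (ℓ : ℕ) (hℓ : 0 < ℓ) (q : ℕ)
    (F : Type*) [Field F] [Fintype F] [DecidableEq F] (hF : Fintype.card F = q)
    (hq1 : ((ℓ : ℝ)) ^ (8 * R / ε + 6 : ℝ) ≤ (q : ℝ))
    (hq2 : (ℓ : ℝ) * (2 : ℝ) ^ (4 / ε : ℝ) ≤ (q : ℝ))
    (n k : ℕ) (hn : 0 < n) (hk : (k : ℝ) = R * n) :
    1 - (q : ℝ) ^ (-((n : ℝ) * (ℓ : ℝ)) / 4 : ℝ) ≤
      (({G : Matrix (Fin n) (Fin k) F |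
          ∀ S : Fin n → Finset F, (∀ i, (S i).card = ℓ) →
            ∀ T : Finset (Fin n → F),
              (↑T : Set (Fin n → F)) ⊆ (LinearMap.range (Matrix.mulVecLin G) : Set (Fin n → F)) →
              (∀ x ∈ T, (1 - (1 - R - ε)) * (n : ℝ) ≤ ((agr x S).card : ℝ)) →
              LinearIndependent F (fun x : {y // y ∈ T} => (x : Fin n → F)) →
              (T.card : ℝ) < 2 * (ℓ : ℝ) / ε}).ncard : ℝ) /
        ((Fintype.card (Matrix (Fin n) (Fin k) F)) : ℝ) :=
  random_linear_code_few_independent_codewords_in_list_recovery_ball_general R ε hε ℓ hℓ q F hF hq1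
    hq2 n k hk
end

section
/- Let ε > 0, let ℓ and r be positive integers, let q be a prime power, let n be a positive integer, and let δ > ε/2. Let V ⊆ F_q^n be an F_q-linear subspace of dimension r such that every nonzero vector of V has Hamming weight at least δn. Then for every choice of input lists S_1,…,S_n ⊆ F_q with |S_i| = ℓ for all i, the number of vectors of V lying in the (δ - ε/2)-radius list-recovery ball B(δ - ε/2, S_1×⋯×S_n) is at most (2ℓ/ε)^r. -/
/-- Key induction lemma. -/
lemma key_lemma (ε : ℝ) (hε : 0 < ε) (ℓ : ℕ) (hℓ : 0 < ℓ) (hbase : 1 ≤ 2 * (ℓ : ℝ) / ε)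
    (F : Type*) [Field F] [Fintype F] [DecidableEq F] (n : ℕ) (hn : 0 < n)
    (S : Fin n → Finset F) (hS : ∀ i, (S i).card = ℓ) :
    ∀ d : ℕ, ∀ W : Submodule F (Fin n → F), Module.finrank F W ≤ d →
    ∀ (c₀ : Fin n → F) (L : Finset (Fin n → F)),
    (∀ x ∈ L, x - c₀ ∈ W) →
    (∀ x ∈ L, (ε / 2) * n ≤ ((agr x S).card : ℝ)) →
    (∀ x ∈ L, ∀ y ∈ L, x ≠ y →
      (ε / 2) * n ≤ (((agr x S).filter fun j => x j ≠ y j).card : ℝ)) →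
    (L.card : ℝ) ≤ (2 * (ℓ : ℝ) / ε) ^ d := by
  intro d
  induction d with
  | zero =>
    intro W hW c₀ L hcoset _ _
    interval_cases h : Module.finrank F W
    have hWbot : W = ⊥ := Submodule.finrank_eq_zero.mp h
    have : L ⊆ {c₀} := by
      intro x hx
      have := hcoset x hx
      rw [hWbot, Submodule.mem_bot, sub_eq_zero] at this
      simp [this]
    have := Finset.card_le_card this
    simp only [Finset.card_singleton] at this
    simp only [pow_zero]
    exact_mod_cast this
  | succ d ih =>
    intro W hW c₀ L hcoset hG1 hG2
    rcases L.eq_empty_or_nonempty with rfl | ⟨c, hc⟩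
    · simp; positivity
    set B : ℝ := 2 * (ℓ : ℝ) / ε with hB
    have hB0 : 0 < B := lt_of_lt_of_le one_pos hbase
    -- the good sets
    set G : (Fin n → F) → Finset (Fin n) :=
      fun x => if x = c then agr c S else (agr x S).filter fun j => x j ≠ c j with hG
    have hGsub : ∀ x, G x ⊆ agr x S := by
      intro x
      by_cases h : x = c
      · simp [hG, h]
      · simp only [hG, if_neg h]; exact Finset.filter_subset _ _
    have hGcard : ∀ x ∈ L, (ε / 2) * n ≤ ((G x).card : ℝ) := by
      intro x hx
      by_cases h : x = c
      · subst h; simpa [hG] using hG1 x hx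
      · simpa [hG, if_neg h] using hG2 x hx c hc h
    -- double counting
    have hsum : (L.card : ℝ) * ((ε / 2) * n) ≤
        ∑ i : Fin n, ((L.filter fun x => i ∈ G x).card : ℝ) := by
      have h1 : (L.card : ℝ) * ((ε / 2) * n) ≤ ∑ x ∈ L, ((G x).card : ℝ) := by
        calc (L.card : ℝ) * ((ε / 2) * n) = ∑ _x ∈ L, (ε / 2) * n := by
              rw [Finset.sum_const, nsmul_eq_mul]
          _ ≤ _ := Finset.sum_le_sum fun x hx => hGcard x hx
      refine h1.trans (le_of_eq ?_)
      push_cast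
      rw [← Nat.cast_sum, ← Nat.cast_sum, Nat.cast_inj]
      calc ∑ x ∈ L, (G x).card = ∑ x ∈ L, ∑ i : Fin n, (if i ∈ G x then 1 else 0) := by
            refine Finset.sum_congr rfl fun x _ => ?_
            rw [← Finset.card_filter]
            congr 1
            ext i; simp
        _ = ∑ i : Fin n, ∑ x ∈ L, (if i ∈ G x then 1 else 0) := Finset.sum_comm
        _ = _ := by
            refine Finset.sum_congr rfl fun i _ => ?_
            rw [Finset.card_filter]
    -- averaging over coordinates
    have hex : ∃ i : Fin n, (L.card : ℝ) * (ε / 2) ≤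
        ((L.filter fun x => i ∈ G x).card : ℝ) := by
      by_contra hcon
      push_neg at hcon
      have : ∑ i : Fin n, ((L.filter fun x => i ∈ G x).card : ℝ) <
          ∑ _i : Fin n, (L.card : ℝ) * (ε / 2) :=
        Finset.sum_lt_sum_of_nonempty
          (haveI : Nonempty (Fin n) := Fin.pos_iff_nonempty.mp hn; Finset.univ_nonempty)
          fun i _ => hcon i
      rw [Finset.sum_const, nsmul_eq_mul, Finset.card_univ, Fintype.card_fin] at this
      have := hsum.trans_lt this
      nlinarith
    obtain ⟨i, hi⟩ := hex
    set T : Finset (Fin n → F) := L.filter fun x => i ∈ G x with hT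
    have hTmem : ∀ x ∈ T, x i ∈ S i := by
      intro x hx
      rw [hT, Finset.mem_filter] at hx
      have := hGsub x hx.2
      simpa [agr] using this
    -- pigeonhole over values in S i
    have hfib : ∃ α ∈ S i, (T.card : ℝ) / ℓ ≤ ((T.filter fun x => x i = α).card : ℝ) := by
      by_contra hcon
      push_neg at hcon
      have hcardT : T.card = ∑ α ∈ S i, (T.filter fun x => x i = α).card :=
        Finset.card_eq_sum_card_fiberwise hTmem
      have hlt : ∑ α ∈ S i, ((T.filter fun x => x i = α).card : ℝ) <
          ∑ _α ∈ S i, (T.card : ℝ) / ℓ :=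
        Finset.sum_lt_sum_of_nonempty (by rw [← Finset.card_pos, hS i]; exact hℓ)
          fun α hα => hcon α hα
      rw [Finset.sum_const, nsmul_eq_mul, hS i] at hlt
      have : (T.card : ℝ) = ∑ α ∈ S i, ((T.filter fun x => x i = α).card : ℝ) := by
        rw [← Nat.cast_sum, hcardT]
      rw [← this] at hlt
      have hℓR : (0 : ℝ) < ℓ := by exact_mod_cast hℓ
      rw [mul_div_cancel₀ _ (ne_of_gt hℓR)] at hlt
      exact lt_irrefl _ hlt
    obtain ⟨α, hαS, hα⟩ := hfib
    set P : Finset (Fin n → F) := T.filter fun x => x i = α with hP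
    have hℓR : (0 : ℝ) < ℓ := by exact_mod_cast hℓ
    have hPlarge : (L.card : ℝ) * (ε / 2) / ℓ ≤ (P.card : ℝ) :=
      le_trans (by gcongr) hα
    have hLpos : (0 : ℝ) < L.card := by
      exact_mod_cast Finset.card_pos.mpr ⟨c, hc⟩
    by_cases hαc : α = c i
    · -- the fiber is just {c}
      have hPsub : P ⊆ {c} := by
        intro x hx
        rw [hP, Finset.mem_filter, hT, Finset.mem_filter] at hx
        obtain ⟨⟨_, hxG⟩, hxα⟩ := hx
        by_contra hne
        simp only [Finset.mem_singleton] at hne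
        simp only [hG, if_neg hne, Finset.mem_filter] at hxG
        exact hxG.2 (hxα.trans hαc)
      have hP1 : (P.card : ℝ) ≤ 1 := by
        exact_mod_cast Finset.card_le_card hPsub
      have : (L.card : ℝ) ≤ B := by
        have h2 : (L.card : ℝ) * (ε / 2) / ℓ ≤ 1 := hPlarge.trans hP1
        rw [div_le_one hℓR] at h2
        rw [hB, le_div_iff₀ hε]
        linarith
      calc (L.card : ℝ) ≤ B := this
        _ = B ^ 1 := (pow_one B).symm
        _ ≤ B ^ (d + 1) := pow_le_pow_right₀ hbase (by omega)
    · -- recurse into a smaller subspace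
      have hPne : P.Nonempty := by
        rw [← Finset.card_pos]
        by_contra h
        push_neg at h
        have h0 : P.card = 0 := Nat.le_zero.mp h
        rw [h0] at hPlarge
        norm_num at hPlarge
        have := div_pos (mul_pos hLpos (half_pos hε)) hℓR
        linarith
      obtain ⟨c'', hc''⟩ := hPne
      have hc''P : c'' ∈ T ∧ c'' i = α := by
        rw [hP, Finset.mem_filter] at hc''; exact hc''
      have hc''L : c'' ∈ L := (Finset.mem_filter.mp hc''P.1).1
      set W' : Submodule F (Fin n → F) :=
        W ⊓ LinearMap.ker (LinearMap.proj i : (Fin n → F) →ₗ[F] F) with hW'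
      have hmemW : ∀ x ∈ L, ∀ y ∈ L, x - y ∈ W := by
        intro x hx y hy
        have := W.sub_mem (hcoset x hx) (hcoset y hy)
        simpa using this
      have hcW' : c - c'' ∈ W ∧ c - c'' ∉ W' := by
        refine ⟨hmemW c hc c'' hc''L, ?_⟩
        rw [hW', Submodule.mem_inf]
        rintro ⟨-, hker⟩
        rw [LinearMap.mem_ker] at hker
        have : c i - c'' i = 0 := hker
        rw [hc''P.2, sub_eq_zero] at this
        exact hαc this.symm
      have hWlt : W' < W := by
        refine lt_of_le_of_ne inf_le_left fun h => ?_
        exact hcW'.2 (h ▸ hcW'.1)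
      have hrank' : Module.finrank F W' ≤ d := by
        have := Submodule.finrank_lt_finrank_of_lt hWlt
        omega
      have hrec : (P.card : ℝ) ≤ B ^ d := by
        refine ih W' hrank' c'' P ?_ ?_ ?_
        · intro x hx
          rw [hP, Finset.mem_filter] at hx
          have hxL : x ∈ L := (Finset.mem_filter.mp hx.1).1
          rw [hW', Submodule.mem_inf]
          refine ⟨hmemW x hxL c'' hc''L, ?_⟩
          rw [LinearMap.mem_ker]
          show x i - c'' i = 0
          rw [hx.2, hc''P.2, sub_self]
        · intro x hx
          exact hG1 x (Finset.mem_filter.mp (Finset.mem_filter.mp hx).1).1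
        · intro x hx y hy hxy
          exact hG2 x (Finset.mem_filter.mp (Finset.mem_filter.mp hx).1).1
            y (Finset.mem_filter.mp (Finset.mem_filter.mp hy).1).1 hxy
      have : (L.card : ℝ) * (ε / 2) / ℓ ≤ B ^ d := hPlarge.trans hrec
      have hBd : (0:ℝ) ≤ B ^ d := le_of_lt (pow_pos hB0 d)
      calc (L.card : ℝ) = (L.card : ℝ) * (ε / 2) / ℓ * B := by
            rw [hB]; field_simp
        _ ≤ B ^ d * B := by gcongr
        _ = B ^ (d + 1) := (pow_succ B d).symm

/-- A subspace `V ⊆ F_q^n` of dimension `r` in which every nonzero vector has Hamming weight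
at least `δn` contains at most `(2ℓ/ε)^r` points of any `(δ - ε/2)`-radius `ℓ`-list-recovery
ball. -/
theorem subspace_with_distance_few_points_in_list_recovery_ball
    (ε : ℝ) (hε : 0 < ε) (ℓ r : ℕ) (hℓ : 0 < ℓ) (hr : 0 < r)
    (F : Type*) [Field F] [Fintype F] [DecidableEq F]
    (n : ℕ) (hn : 0 < n) (δ : ℝ) (hδ : ε / 2 < δ)
    (V : Submodule F (Fin n → F)) (hdim : Module.finrank F V = r)
    (hdist : ∀ c ∈ V, c ≠ 0 →
      δ * (n : ℝ) ≤ ((Finset.univ.filter fun i => c i ≠ 0).card : ℝ))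
    (S : Fin n → Finset F) (hS : ∀ i, (S i).card = ℓ) :
    (({x ∈ (V : Set (Fin n → F)) |
        (1 - (δ - ε / 2)) * (n : ℝ) ≤ ((agr x S).card : ℝ)}).ncard : ℝ) ≤
      (2 * (ℓ : ℝ) / ε) ^ r := by
  have hnR : (0 : ℝ) < n := by exact_mod_cast hn
  -- δ ≤ 1
  have hδ1 : δ ≤ 1 := by
    have hVbot : V ≠ ⊥ := by
      intro h
      rw [h, finrank_bot] at hdim
      omega
    obtain ⟨v, hvV, hv0⟩ := Submodule.ne_bot_iff V |>.mp hVbot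
    have h1 := hdist v hvV hv0
    have h2 : ((Finset.univ.filter fun i => v i ≠ 0).card : ℝ) ≤ n := by
      exact_mod_cast (Finset.card_filter_le _ _).trans (by simp)
    nlinarith
  have hℓ1 : (1 : ℝ) ≤ ℓ := by exact_mod_cast hℓ
  have hbase : 1 ≤ 2 * (ℓ : ℝ) / ε := by
    rw [le_div_iff₀ hε]
    nlinarith
  set s : Set (Fin n → F) := {x ∈ (V : Set (Fin n → F)) |
      (1 - (δ - ε / 2)) * (n : ℝ) ≤ ((agr x S).card : ℝ)} with hs
  have hfin : s.Finite := Set.toFinite s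
  rw [Set.ncard_eq_toFinset_card _ hfin]
  set L : Finset (Fin n → F) := hfin.toFinset with hL
  have hmem : ∀ x ∈ L, x ∈ V ∧ (1 - (δ - ε / 2)) * (n : ℝ) ≤ ((agr x S).card : ℝ) := by
    intro x hx
    rw [hL, Set.Finite.mem_toFinset, hs] at hx
    exact hx
  refine key_lemma ε hε ℓ hℓ hbase F n hn S hS r V hdim.le 0 L ?_ ?_ ?_
  · intro x hx
    simpa using (hmem x hx).1
  · intro x hx
    have := (hmem x hx).2
    nlinarith
  · intro x hx y hy hxy
    have hxV := (hmem x hx).1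
    have hyV := (hmem y hy).1
    have hagr := (hmem x hx).2
    have hd := hdist (x - y) (V.sub_mem hxV hyV) (sub_ne_zero.mpr hxy)
    have hDeq : (Finset.univ.filter fun i => (x - y) i ≠ 0) =
        (Finset.univ.filter fun i => x i ≠ y i) := by
      apply Finset.filter_congr
      intro i _
      simp [sub_ne_zero]
    rw [hDeq] at hd
    set A : Finset (Fin n) := agr x S with hA
    have hsplit : (A.filter fun j => x j ≠ y j).card +
        (A.filter fun j => ¬ (x j ≠ y j)).card = A.card :=
      Finset.card_filter_add_card_filter_not _
    have hEsub : (A.filter fun j => ¬ (x j ≠ y j)) ⊆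
        Finset.univ.filter fun j => ¬ (x j ≠ y j) :=
      Finset.filter_subset_filter _ (Finset.subset_univ A)
    have hEcard : ((Finset.univ.filter fun j => ¬ (x j ≠ y j)).card : ℝ) ≤ n - δ * n := by
      have hpart : (Finset.univ.filter fun j => x j ≠ y j).card +
          (Finset.univ.filter fun j => ¬ (x j ≠ y j)).card = n := by
        rw [Finset.card_filter_add_card_filter_not]
        simp
      have : ((Finset.univ.filter fun j => x j ≠ y j).card : ℝ) +
          ((Finset.univ.filter fun j => ¬ (x j ≠ y j)).card : ℝ) = n := by
        exact_mod_cast hpart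
      linarith
    have h1 : ((A.filter fun j => ¬ (x j ≠ y j)).card : ℝ) ≤ n - δ * n := by
      refine le_trans ?_ hEcard
      exact_mod_cast Finset.card_le_card hEsub
    have h2 : ((A.filter fun j => x j ≠ y j).card : ℝ) +
        ((A.filter fun j => ¬ (x j ≠ y j)).card : ℝ) = (A.card : ℝ) := by
      exact_mod_cast hsplit
    have h3 : ((A.filter fun j => x j ≠ y j).card : ℝ) ≥ ε / 2 * n := by
      nlinarith
    exact h3
end

section
/- Let R, ε ∈ (0,1) with ε < 1 - R, let ℓ ≥ 2 be an integer, and let q ≥ ℓ be a prime power. There exists n_0 = n_0(ℓ, R, ε) such that for every n ≥ n_0 with Rn an integer and every linear code C ⊆ F_q^n of dimension Rn, there exist input lists S_1,…,S_n ⊆ F_q with |S_i| = ℓ for all i such that the (1-R-ε)-radius list-recovery ball B(1-R-ε, S_1×⋯×S_n) contains at least ⌈(1-R)ℓ/ε⌉ - 1 linearly independent codewords of C. -/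
open Finset Module
open scoped Pointwise

/-!
Shortening `C` on `k - m` coordinates leaves `m` linearly independent codewords `w_g`,
`g : Fin m`, that vanish there. Split the remaining `n - k + m` coordinates into
`⌊(n - k + m) / m⌋` blocks of `m` coordinates indexed by `Fin m`, fix `D ⊆ Fin m` with `|D| = ℓ`,
and at the coordinate of a block indexed by `v` put the values of the `w_g` with `g ∈ v + D` into
the list; elsewhere the list contains `0`. Every `w_g` lies in `|D| = ℓ` translates `v + D`, so it
agrees with the lists on the `k - m` shortened coordinates and on `ℓ` coordinates of every block.
This beats `(R + ε) n` as soon as `n ((1 - R) ℓ - ε m) ≥ m²`, and `m = ⌈(1 - R) ℓ / ε⌉ - 1` is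
the largest `m` for which `(1 - R) ℓ - ε m` is positive.
-/

theorem Submodule.exists_le_vanishing_on_finrank_le {F ι : Type*} [DivisionRing F] [Fintype ι]
    (C : Submodule F (ι → F)) (Z : Finset ι) :
    ∃ W ≤ C, (∀ x ∈ W, ∀ i ∈ Z, x i = 0) ∧ finrank F C ≤ finrank F W + #Z := by
  let restrict : C →ₗ[F] (Z → F) := (LinearMap.funLeft F F ((↑) : Z → ι)).comp C.subtype
  refine ⟨(LinearMap.ker restrict).map C.subtype, Submodule.map_subtype_le _ _, ?_, ?_⟩
  · rintro _ ⟨x, hx, rfl⟩ i hi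
    exact congrFun hx ⟨i, hi⟩
  · have hrange : finrank F (LinearMap.range restrict) ≤ #Z := by
      simpa using (LinearMap.range restrict).finrank_le
    rw [Submodule.finrank_map_subtype_eq, ← LinearMap.finrank_range_add_finrank_ker restrict]
    omega

theorem Finset.card_filter_mem_vadd_finset {G : Type*} [AddGroup G] [Fintype G] [DecidableEq G]
    (D : Finset G) (j : G) : #{v : G | j ∈ v +ᵥ D} = #D := by
  have : ({v : G | j ∈ v +ᵥ D} : Finset G) = D.image (j - ·) := by
    ext v
    simp only [mem_filter, mem_univ, true_and, mem_vadd_finset, vadd_eq_add, mem_image]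
    exact exists_congr fun d => and_congr_right fun _ => by rw [sub_eq_iff_eq_add, eq_comm]
  rw [this, card_image_of_injective _ sub_right_injective]

theorem exists_translate_cover {α G : Type*} [Fintype α] [AddGroup G] [Fintype G]
    [DecidableEq G] (t : Finset α) (D : Finset G) :
    ∃ A : α → Finset G, (∀ i, #(A i) ≤ #D) ∧ (∀ i ∉ t, A i = ∅) ∧
      ∀ j, #t / Fintype.card G * #D ≤ #{i | j ∈ A i} := by
  classical
  obtain ⟨e⟩ : Nonempty (G × Fin (#t / Fintype.card G) ↪ t) :=
    Function.Embedding.nonempty_of_card_le <| by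
      simpa [mul_comm] using Nat.div_mul_le_self #t (Fintype.card G)
  let f : G × Fin (#t / Fintype.card G) ↪ α := e.trans (Function.Embedding.subtype _)
  refine ⟨fun i => (Function.partialInv f i).elim ∅ (fun p => p.1 +ᵥ D), fun i => ?_,
    fun i hi => ?_, fun j => ?_⟩
  · dsimp only
    cases Function.partialInv f i <;> simp
  · dsimp only
    cases h : Function.partialInv f i with
    | none => rfl
    | some p => exact absurd (f.injective.isPartialInv p i |>.1 h ▸ (e p).2) hi
  · calc #t / Fintype.card G * #D
        = #((({v : G | j ∈ v +ᵥ D} : Finset G) ×ˢ (univ : Finset (Fin _))).map f) := by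
          simp [card_filter_mem_vadd_finset, mul_comm]
      _ ≤ #{i | j ∈ (Function.partialInv f i).elim ∅ (fun p => p.1 +ᵥ D)} := by
          refine card_le_card fun i hi => ?_
          obtain ⟨⟨v, k⟩, hv, rfl⟩ := mem_map.1 hi
          simpa [Function.partialInv_left f.injective] using (mem_product.1 hv).1

theorem exists_lists_card_add_card_le_card_agr {F G : Type*} [Zero F] [Fintype F] [DecidableEq F]
    [DecidableEq G] {n ℓ : ℕ} (w : G → Fin n → F) (Z : Finset (Fin n)) (hwZ : ∀ j, ∀ i ∈ Z, w j i = 0)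
    (A : Fin n → Finset G) (hAZ : ∀ i ∈ Z, A i = ∅) (hA : ∀ i, #(A i) ≤ ℓ) (hℓ : 1 ≤ ℓ)
    (hF : ℓ ≤ Fintype.card F) :
    ∃ S : Fin n → Finset F, (∀ i, #(S i) = ℓ) ∧
      ∀ j, #Z + #{i | j ∈ A i} ≤ #(agr (w j) S) := by
  classical
  let V : Fin n → Finset F := fun i => if i ∈ Z then {0} else (A i).image (w · i)
  have hV : ∀ i, #(V i) ≤ ℓ := fun i => by
    by_cases hi : i ∈ Z
    · simpa [V, hi] using hℓ
    · simpa [V, hi] using card_image_le.trans (hA i)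
  choose S hVS hS using fun i => exists_superset_card_eq (hV i) hF
  refine ⟨S, hS, fun j => ?_⟩
  have hdisj : Disjoint Z ({i | j ∈ A i} : Finset (Fin n)) :=
    disjoint_left.2 fun i hiZ hi => by simp [hAZ i hiZ] at hi
  rw [← card_union_of_disjoint hdisj]
  refine card_le_card fun i hi => mem_filter.2 ⟨mem_univ _, hVS i ?_⟩
  rcases mem_union.1 hi with hiZ | hi
  · simp [V, hiZ, hwZ j i hiZ]
  · have hiZ : i ∉ Z := disjoint_right.1 hdisj hi
    simpa [V, hiZ] using ⟨j, (mem_filter.1 hi).2, rfl⟩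

theorem add_mul_le_sub_add_div_mul {R ε : ℝ} {n k m ℓ : ℕ} (hk : (k : ℝ) = R * n) (hmk : m ≤ k)
    (hkn : k ≤ n) (hm : 0 < m) (hn : (m : ℝ) ^ 2 ≤ n * ((1 - R) * ℓ - ε * m)) :
    (R + ε) * n ≤ ((k - m + (n - (k - m)) / m * ℓ : ℕ) : ℝ) := by
  set q := (n - (k - m)) / m
  have hq : (n : ℝ) - k < q * m := by
    have : ((n - (k - m) : ℕ) : ℝ) < q * m + m := by exact_mod_cast Nat.lt_div_mul_add hm
    push_cast [Nat.cast_sub hmk, Nat.cast_sub (by omega : k - m ≤ n)] at this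
    linarith
  have hℓq : (ℓ : ℝ) * (n - k) ≤ ℓ * (q * m) := by gcongr
  have hm' : (0 : ℝ) < m := by exact_mod_cast hm
  refine le_of_mul_le_mul_left ?_ hm'
  push_cast [Nat.cast_sub hmk]
  rw [hk] at hℓq ⊢
  linarith

theorem Nat.cast_ceil_sub_one_lt {K : Type*} [Field K] [LinearOrder K] [IsStrictOrderedRing K]
    [FloorSemiring K] {y : K} (hy : 0 < y) : ((⌈y⌉₊ - 1 : ℕ) : K) < y := by
  rw [Nat.cast_sub (Nat.one_le_iff_ne_zero.2 (Nat.ceil_pos.2 hy).ne'), Nat.cast_one]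
  linarith [Nat.ceil_lt_add_one hy.le]

theorem exists_lists_linearIndependent_codewords_card_le_agr {F : Type*} [DivisionRing F]
    [Fintype F] [DecidableEq F] {n ℓ m : ℕ} (C : Submodule F (Fin n → F)) (hℓ : 1 ≤ ℓ)
    (hℓm : ℓ ≤ m) (hmC : m ≤ finrank F C) (hF : ℓ ≤ Fintype.card F) :
    ∃ S : Fin n → Finset F, (∀ i, #(S i) = ℓ) ∧
      ∃ T : Finset (Fin n → F), (T : Set (Fin n → F)) ⊆ C ∧
        (∀ x ∈ T, finrank F C - m + (n - (finrank F C - m)) / m * ℓ ≤ #(agr x S)) ∧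
        LinearIndependent F (fun x : T => (x : Fin n → F)) ∧ #T = m := by
  have hCn : finrank F C ≤ n := by simpa using C.finrank_le
  obtain ⟨Z, -, hZ⟩ := exists_subset_card_eq (s := (univ : Finset (Fin n)))
    (n := finrank F C - m) (by rw [card_univ, Fintype.card_fin]; omega)
  obtain ⟨W, hWC, hWZ, hW⟩ := C.exists_le_vanishing_on_finrank_le Z
  have : NeZero m := ⟨by omega⟩
  obtain ⟨w, hw⟩ := exists_linearIndependent_of_le_finrank (R := F) (M := W) (n := m) (by omega)
  obtain ⟨D, -, hD⟩ := exists_subset_card_eq (s := (univ : Finset (Fin m))) (n := ℓ)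
    (by simpa using hℓm)
  obtain ⟨A, hA, hAZ, hAj⟩ := exists_translate_cover Zᶜ D
  obtain ⟨S, hS, hSagr⟩ := exists_lists_card_add_card_le_card_agr (fun j => (w j : Fin n → F)) Z
    (fun j i hi => hWZ _ (w j).2 i hi) A (fun i hi => hAZ i (by simpa using hi)) (hD ▸ hA) hℓ hF
  have hinj : Function.Injective fun j => (w j : Fin n → F) :=
    Subtype.val_injective.comp hw.injective
  refine ⟨S, hS, univ.image fun j => (w j : Fin n → F), ?_, ?_, ?_, ?_⟩
  · simp only [coe_image, coe_univ, Set.image_univ, Set.range_subset_iff]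
    exact fun j => hWC (w j).2
  · simp only [mem_image, mem_univ, true_and, forall_exists_index, forall_apply_eq_imp_iff]
    intro j
    have hcover := hAj j
    rw [card_compl, Fintype.card_fin, Fintype.card_fin, hZ, hD] at hcover
    exact (Nat.add_le_add hZ.ge hcover).trans (hSagr j)
  · have := (linearIndepOn_id_range_iff hinj).2 (hw.map' W.subtype W.ker_subtype)
    rwa [← Set.image_univ, ← coe_univ, ← coe_image] at this
  · rw [card_image_of_injective _ hinj, card_univ, Fintype.card_fin]

/-- Every linear code of rate `R` has a `(1-R-ε)`-radius `ℓ`-list-recovery ball containing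
at least `⌈(1-R)ℓ/ε⌉ - 1` linearly independent codewords.  Here `n₀` depends only on `ℓ`,
`R` and `ε`. -/
theorem linear_codes_many_independent_codewords_in_list_recovery_ball
    (R ε : ℝ) (hR : R ∈ Set.Ioo (0 : ℝ) 1) (hε : ε ∈ Set.Ioo (0 : ℝ) 1)
    (hcap : ε < 1 - R) (ℓ : ℕ) (hℓ : 2 ≤ ℓ) :
    ∃ n₀ : ℕ, ∀ n : ℕ, n₀ ≤ n →
      ∀ (F : Type) (_ : Field F) (_ : Fintype F) (_ : DecidableEq F),
        ℓ ≤ Fintype.card F →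
        ∀ (C : Submodule F (Fin n → F)) (k : ℕ),
          (k : ℝ) = R * (n : ℝ) → Module.finrank F C = k →
          ∃ S : Fin n → Finset F, (∀ i, (S i).card = ℓ) ∧
            ∃ T : Finset (Fin n → F),
              (↑T : Set (Fin n → F)) ⊆ (C : Set (Fin n → F)) ∧
              (∀ x ∈ T, (1 - (1 - R - ε)) * (n : ℝ) ≤ ((agr x S).card : ℝ)) ∧
              LinearIndependent F (fun x : {y // y ∈ T} => (x : Fin n → F)) ∧
              ⌈(1 - R) * (ℓ : ℝ) / ε⌉₊ - 1 ≤ T.card := by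
  obtain ⟨hR, -⟩ := hR
  obtain ⟨hε, -⟩ := hε
  set m := ⌈(1 - R) * (ℓ : ℝ) / ε⌉₊ - 1
  have hℓx : (ℓ : ℝ) < (1 - R) * ℓ / ε := by
    rw [lt_div_iff₀ hε, mul_comm _ (ℓ : ℝ)]
    exact mul_lt_mul_of_pos_left hcap (by exact_mod_cast (by omega : 0 < ℓ))
  have hℓm : ℓ ≤ m := Nat.le_sub_one_of_lt (Nat.lt_ceil.2 hℓx)
  have hc : 0 < (1 - R) * ℓ - ε * m := by
    have := (lt_div_iff₀ hε).1 (Nat.cast_ceil_sub_one_lt ((Nat.cast_nonneg ℓ).trans_lt hℓx))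
    linarith
  refine ⟨max ⌈m / R⌉₊ ⌈m ^ 2 / ((1 - R) * ℓ - ε * m)⌉₊, fun n hn F _ _ _ hF C k hk hCk => ?_⟩
  have hmk : m ≤ k := by
    have := (div_le_iff₀ hR).1 (Nat.ceil_le.1 (le_of_max_le_left hn))
    exact_mod_cast hk ▸ (by linarith : (m : ℝ) ≤ R * n)
  have hmn : (m : ℝ) ^ 2 ≤ n * ((1 - R) * ℓ - ε * m) :=
    (div_le_iff₀ hc).1 (Nat.ceil_le.1 (le_of_max_le_right hn))
  obtain ⟨S, hS, T, hTC, hTagr, hT, hTm⟩ :=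
    exists_lists_linearIndependent_codewords_card_le_agr C (by omega) hℓm (hCk ▸ hmk) hF
  refine ⟨S, hS, T, hTC, fun x hx => ?_, hT, hTm.ge⟩
  have hkn : k ≤ n := by simpa [hCk] using C.finrank_le
  calc (1 - (1 - R - ε)) * n = (R + ε) * n := by ring
    _ ≤ ((k - m + (n - (k - m)) / m * ℓ : ℕ) : ℝ) :=
        add_mul_le_sub_add_div_mul hk hmk hkn (by omega) hmn
    _ ≤ #(agr x S) := by exact_mod_cast hCk ▸ hTagr x hx
end

section
/- Let F be a field, let C ⊆ F^n be a linear code of dimension k ≥ 2, and let k' be a positive integer with k' ≤ k - 1 and n ≥ k + k'. Set m = ⌊(k-1)/(k'+1)⌋. Then there exist a subset T ⊆ [n] with |T| = k + k' and linearly independent codewords w_0, w_1, …, w_m ∈ C such that the sets {j ∈ T : (w_i)_j ≠ 0} for i = 0, 1, …, m are pairwise disjoint. -/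
/-- An information set: a set of at most `finrank C` coordinates on which
restriction is injective on `C`. -/
lemma exists_info_set (F : Type*) [Field F] (n : ℕ)
    (C : Submodule F (Fin n → F)) :
    ∃ S : Finset (Fin n), S.card ≤ Module.finrank F C ∧
      ∀ v ∈ C, (∀ j ∈ S, v j = 0) → v = 0 := by
  classical
  set P : Finset (Fin n) → Prop :=
    fun S => ∀ v ∈ C, (∀ j ∈ S, v j = 0) → v = 0 with hP
  have hQ : ∃ c, ∃ S, S.card = c ∧ P S := by
    refine ⟨n, Finset.univ, by simp, fun v _ hv => funext fun j => hv j (Finset.mem_univ j)⟩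
  set c₀ := Nat.find hQ with hc₀
  obtain ⟨S₀, hS₀card, hS₀⟩ := Nat.find_spec hQ
  -- for each j ∈ S₀ there is a nonzero codeword vanishing on S₀.erase j
  have hmin : ∀ j ∈ S₀, ∃ v ∈ C, (∀ a ∈ S₀.erase j, v a = 0) ∧ v j ≠ 0 := by
    intro j hj
    have hlt : (S₀.erase j).card < c₀ := by
      rw [Finset.card_erase_of_mem hj, hS₀card]
      have hpos : 0 < S₀.card := Finset.card_pos.mpr ⟨j, hj⟩
      omega
    have hnP : ¬ P (S₀.erase j) := by
      intro h
      exact Nat.find_min hQ hlt ⟨S₀.erase j, rfl, h⟩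
    simp only [hP, not_forall] at hnP
    obtain ⟨v, hvC, hvz, hvne⟩ := hnP
    refine ⟨v, hvC, hvz, fun hvj => hvne (hS₀ v hvC ?_)⟩
    intro a ha
    by_cases haj : a = j
    · rwa [haj]
    · exact hvz a (Finset.mem_erase.mpr ⟨haj, ha⟩)
  choose v hvC hvz hvj using hmin
  -- the family v is linearly independent
  set v' : S₀ → C := fun j => ⟨v j j.2, hvC j j.2⟩ with hv'
  have hli : LinearIndependent F v' := by
    rw [Fintype.linearIndependent_iff]
    intro g hg i
    have := congrArg (fun x : C => (x : Fin n → F) (i : Fin n)) hg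
    simp only [Submodule.coe_sum, Finset.sum_apply, Submodule.coe_smul, Pi.smul_apply,
      smul_eq_mul, Submodule.coe_zero, Pi.zero_apply] at this
    rw [Finset.sum_eq_single i] at this
    · rcases mul_eq_zero.mp this with h | h
      · exact h
      · exact absurd h (hvj i i.2)
    · intro b _ hbi
      have : (i : Fin n) ∈ S₀.erase (b : Fin n) := by
        refine Finset.mem_erase.mpr ⟨?_, i.2⟩
        exact fun h => hbi (Subtype.ext h.symm)
      simp [hv', hvz b b.2 _ this]
    · intro h; exact absurd (Finset.mem_univ i) h
  have hcard : S₀.card ≤ Module.finrank F C := by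
    have := hli.fintype_card_le_finrank
    simpa [Fintype.card_coe] using this
  exact ⟨S₀, hcard, hS₀⟩

/-- In any linear code `C ⊆ F^n` of dimension `k ≥ 2`, for any `1 ≤ k' ≤ k-1` with
`n ≥ k + k'` and `m = ⌊(k-1)/(k'+1)⌋`, there are a set `T` of `k + k'` coordinates and
linearly independent codewords `w₀, w₁, …, w_m` whose supports restricted to `T` are
pairwise disjoint. -/
theorem exists_independent_codewords_with_disjoint_supports
    (F : Type*) [Field F] (n k k' : ℕ) (hk : 2 ≤ k) (hk'0 : 0 < k') (hk' : k' ≤ k - 1)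
    (hn : k + k' ≤ n)
    (C : Submodule F (Fin n → F)) (hdim : Module.finrank F C = k)
    (m : ℕ) (hm : m = (k - 1) / (k' + 1)) :
    ∃ T : Finset (Fin n), T.card = k + k' ∧
      ∃ w : Fin (m + 1) → (Fin n → F),
        (∀ i, w i ∈ C) ∧ LinearIndependent F w ∧
        ∀ i j : Fin (m + 1), i ≠ j →
          Disjoint {a : Fin n | a ∈ T ∧ w i a ≠ 0} {a : Fin n | a ∈ T ∧ w j a ≠ 0} := by
  classical
  obtain ⟨S₀, hS₀card, hS₀⟩ := exists_info_set F n C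
  rw [hdim] at hS₀card
  -- extend to T of card k + k'
  obtain ⟨T, hST, hTcard⟩ :=
    Finset.exists_superset_card_eq (le_trans hS₀card (Nat.le_add_right k k'))
      (by simpa using hn)
  -- restriction to T is injective on C
  have hTinj : ∀ v ∈ C, (∀ j ∈ T, v j = 0) → v = 0 := by
    intro v hv h
    exact hS₀ v hv fun j hj => h j (hST hj)
  -- key arithmetic
  have hmK : (m + 1) * (k' + 1) ≤ k + k' := by
    have h1 : m * (k' + 1) ≤ k - 1 := by rw [hm]; exact Nat.div_mul_le_self (k - 1) (k' + 1)
    have h2 : (m + 1) * (k' + 1) = m * (k' + 1) + (k' + 1) := by ring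
    omega
  -- the ordered enumeration of T
  set g : Fin (k + k') → Fin n := fun t => ((T.orderIsoOfFin hTcard) t : Fin n) with hg
  have hginj : Function.Injective g := fun a b hab => by
    have := (T.orderIsoOfFin hTcard).injective (Subtype.ext hab)
    exact this
  have hgT : ∀ t, g t ∈ T := fun t => ((T.orderIsoOfFin hTcard) t).2
  -- blocks
  set B : Fin (m + 1) → Finset (Fin n) := fun i =>
    (Finset.univ.filter (fun t : Fin (k + k') =>
      i.val * (k' + 1) ≤ t.val ∧ t.val < (i.val + 1) * (k' + 1))).image g with hB
  have hBsubT : ∀ i, B i ⊆ T := by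
    intro i a ha
    rw [hB] at ha
    obtain ⟨t, _, rfl⟩ := Finset.mem_image.mp ha
    exact hgT t
  have hBdisj : ∀ i j : Fin (m + 1), i ≠ j → Disjoint (B i) (B j) := by
    intro i j hij
    rw [Finset.disjoint_left]
    intro a hai haj
    obtain ⟨t, ht, rfl⟩ := Finset.mem_image.mp hai
    obtain ⟨s, hs, hgs⟩ := Finset.mem_image.mp haj
    have hst : s = t := hginj hgs
    subst hst
    simp only [Finset.mem_filter, Finset.mem_univ, true_and] at ht hs
    have h1 := Nat.div_eq_of_lt_le ht.1 ht.2
    have h2 := Nat.div_eq_of_lt_le hs.1 hs.2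
    exact hij (Fin.ext (h1 ▸ h2))
  have hBcard : ∀ i, k' + 1 ≤ (B i).card := by
    intro i
    have hiub : (i.val + 1) * (k' + 1) ≤ k + k' :=
      le_trans (Nat.mul_le_mul_right _ (by omega : i.val + 1 ≤ m + 1)) hmK
    rw [hB, Finset.card_image_of_injective _ hginj]
    have hq : (i.val + 1) * (k' + 1) = i.val * (k' + 1) + (k' + 1) := by ring
    have : ∀ s : Fin (k' + 1), (⟨i.val * (k' + 1) + s.val, by
        have := s.isLt; omega⟩ : Fin (k + k')) ∈
        Finset.univ.filter (fun t : Fin (k + k') =>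
          i.val * (k' + 1) ≤ t.val ∧ t.val < (i.val + 1) * (k' + 1)) := by
      intro s
      simp only [Finset.mem_filter, Finset.mem_univ, true_and]
      have := s.isLt
      constructor <;> omega
    calc k' + 1 = (Finset.univ : Finset (Fin (k' + 1))).card := by simp
      _ ≤ _ := Finset.card_le_card_of_injOn _ (fun s _ => this s)
            (fun a _ b _ hab => by
              have : i.val * (k' + 1) + a.val = i.val * (k' + 1) + b.val :=
                congrArg Fin.val hab
              exact Fin.ext (by omega))
  -- the complements within T
  set A : Fin (m + 1) → Finset (Fin n) := fun i => T \ B i with hA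
  have hAcard : ∀ i, (A i).card ≤ k - 1 := by
    intro i
    show (T \ B i).card ≤ k - 1
    have h1 := Finset.card_sdiff_of_subset (hBsubT i)
    have h2 := hBcard i
    omega
  -- nonzero codewords vanishing on A i
  have hexu : ∀ i : Fin (m + 1), ∃ u : Fin n → F, u ∈ C ∧ u ≠ 0 ∧
      ∀ a ∈ A i, u a = 0 := by
    intro i
    set ψ : C →ₗ[F] (↥(A i) → F) :=
      (LinearMap.funLeft F F (fun a : ↥(A i) => (a : Fin n))).comp C.subtype
      with hψ
    have hrange : Module.finrank F (LinearMap.range ψ) ≤ k - 1 := by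
      refine le_trans (Submodule.finrank_le _) ?_
      rw [Module.finrank_fintype_fun_eq_card, Fintype.card_coe]
      exact hAcard i
    have hrank := LinearMap.finrank_range_add_finrank_ker ψ
    rw [hdim] at hrank
    have hkerpos : 0 < Module.finrank F (LinearMap.ker ψ) := by omega
    have : Nontrivial (LinearMap.ker ψ) := Module.nontrivial_of_finrank_pos hkerpos
    obtain ⟨u, hu⟩ := exists_ne (0 : LinearMap.ker ψ)
    refine ⟨((u : C) : Fin n → F), (u : C).2, ?_, ?_⟩
    · intro h
      exact hu (Subtype.ext (Subtype.ext h))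
    · intro a ha
      have := u.2
      rw [LinearMap.mem_ker] at this
      exact congrFun this ⟨a, ha⟩
  choose u huC hune huz using hexu
  -- each u i is nonzero somewhere on B i
  have husup : ∀ i, ∃ a ∈ B i, u i a ≠ 0 := by
    intro i
    by_contra h
    push_neg at h
    apply hune i
    apply hTinj _ (huC i)
    intro j hj
    by_cases hjB : j ∈ B i
    · exact h j hjB
    · exact huz i j (Finset.mem_sdiff.mpr ⟨hj, hjB⟩)
  -- support inside T is contained in B i
  have hsub : ∀ i, {a : Fin n | a ∈ T ∧ u i a ≠ 0} ⊆ (B i : Set (Fin n)) := by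
    intro i a ⟨haT, hau⟩
    by_contra hB'
    exact hau (huz i a (Finset.mem_sdiff.mpr ⟨haT, fun h => hB' h⟩))
  refine ⟨T, hTcard, u, huC, ?_, ?_⟩
  · rw [Fintype.linearIndependent_iff]
    intro c hc i
    obtain ⟨a, haB, hau⟩ := husup i
    have := congrFun hc a
    simp only [Finset.sum_apply, Pi.smul_apply, smul_eq_mul, Pi.zero_apply] at this
    rw [Finset.sum_eq_single i] at this
    · rcases mul_eq_zero.mp this with h | h
      · exact h
      · exact absurd h hau
    · intro b _ hbi
      have habA : a ∈ A b := Finset.mem_sdiff.mpr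
        ⟨hBsubT i haB, fun h => (Finset.disjoint_left.mp (hBdisj b i hbi) h) haB⟩
      rw [huz b a habA, mul_zero]
    · intro h; exact absurd (Finset.mem_univ i) h
  · intro i j hij
    exact Set.disjoint_of_subset (hsub i) (hsub j)
      (Finset.disjoint_coe.mpr (hBdisj i j hij))
end
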